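/- arXiv:2512.05777 — 2 statements merged into one kernel-verified Lean document; each statement's English description precedes it below -/
import Mathlib

section
/- Let Φ = (φ_{t,ℓ}) ∈ so_n(k[[ℏ]]) be antisymmetric and let σ_Φ be the 2-cocycle on F_ℏ[[GL_n^p]] obtained by evaluation against the twist F_Φ = exp(ℏ·2^{−1} Σ_{t,ℓ=1}^n φ_{t,ℓ} Γ_t ⊗ Γ_ℓ) of U_ℏ(gl_n^p), i.e. σ_Φ(φ,ψ) := ⟨φ ⊗ ψ, F_Φ⟩. Then for all i,r,ℓ,h ∈ {1,…,n}: σ_Φ(x_{i,r}, x_{ℓ,h}) = δ_{i,r} δ_{ℓ,h} e^{ℏ·2^{−1}φ_{i,ℓ}}, and consequently the σ_Φ-deformed product on F_ℏ[[GL_n^p]] satisfies x_{r,s} ·_{σ_Φ} x_{ℓ,t} = e^{ℏ·2^{−1}(φ_{r,ℓ} − φ_{s,t})} x_{r,s} x_{ℓ,t} for all r,s,ℓ,t ∈ {1,…,n}. -/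
/-!
Formalization framework for (multiparameter) quantum general linear supergroups,
following Gavarini–Paolini, "Multiparameter Quantum General Linear Supergroup".

We work over `k[[ℏ]] := PowerSeries k` for a field `k` of characteristic zero.
"Super" (ℤ₂-graded) structures are encoded by a family of submodules
`g : ZMod 2 → Submodule S A` (the homogeneous components), and the Koszul-sign
multiplication on `A ⊗ A` is encoded by a bilinear map `m2` together with its
characterizing property on homogeneous pure tensors (`IsSuperMul`).
"Topological" notions (ℏ-adic or I-adic completeness, topological generation,
topological bases) are rendered through the corresponding adic filtrations.
-/

open scoped TensorProduct
open Finset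

noncomputable section

namespace QGLS

/-- The sign `(−1)^a` for a parity `a : ZMod 2`. -/
def sg (S : Type) [Ring S] (a : ZMod 2) : S := if a = 0 then 1 else -1

/-- `p_{i,j} := p(i) + p(j)`. -/
def pp (p : ℕ → ZMod 2) (i j : ℕ) : ZMod 2 := p i + p j

section Generic

variable (S : Type) [CommRing S]

section Alg
variable (A : Type) [Ring A] [Algebra S A]

/-- A ℤ₂-grading (super-structure) on an `S`-algebra `A`, by submodules. -/
structure SuperGrading (g : ZMod 2 → Submodule S A) : Prop where
  one_mem : (1 : A) ∈ g 0
  mul_mem : ∀ {i j : ZMod 2} {x y : A}, x ∈ g i → y ∈ g j → x * y ∈ g (i + j)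
  sup_eq : g 0 ⊔ g 1 = ⊤
  inf_eq : g 0 ⊓ g 1 = ⊥

/-- `m2` is the Koszul-signed ("super") multiplication on `A ⊗[S] A`:
`(a ⊗ b)(c ⊗ d) = (−1)^{|b||c|} (ac ⊗ bd)` on homogeneous elements. -/
def IsSuperMul (g : ZMod 2 → Submodule S A)
    (m2 : (A ⊗[S] A) →ₗ[S] (A ⊗[S] A) →ₗ[S] (A ⊗[S] A)) : Prop :=
  ∀ (pb pc : ZMod 2) (a b c d : A), b ∈ g pb → c ∈ g pc →
    m2 (a ⊗ₜ[S] b) (c ⊗ₜ[S] d) = sg S (pb * pc) • ((a * c) ⊗ₜ[S] (b * d))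

/-- The axioms of a (ℤ₂-graded) superbialgebra over `S`, with coproduct `cop`
and counit `cou`; `m2` is the super multiplication of `A ⊗ A`. -/
structure IsSuperBialg (g : ZMod 2 → Submodule S A)
    (m2 : (A ⊗[S] A) →ₗ[S] (A ⊗[S] A) →ₗ[S] (A ⊗[S] A))
    (cop : A →ₗ[S] A ⊗[S] A) (cou : A →ₗ[S] S) : Prop where
  grading : SuperGrading S A g
  superMul : IsSuperMul S A g m2
  comul_one : cop 1 = (1 : A) ⊗ₜ[S] (1 : A)
  comul_mul : ∀ x y : A, cop (x * y) = m2 (cop x) (cop y)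
  counit_one : cou 1 = 1
  counit_mul : ∀ x y : A, cou (x * y) = cou x * cou y
  coassoc : ∀ x : A,
    (TensorProduct.assoc S A A A)
        ((TensorProduct.map cop (LinearMap.id : A →ₗ[S] A)) (cop x))
      = (TensorProduct.map (LinearMap.id : A →ₗ[S] A) cop) (cop x)
  counit_comul : ∀ x : A,
    (TensorProduct.lid S A) ((TensorProduct.map cou (LinearMap.id : A →ₗ[S] A)) (cop x)) = x
  comul_counit : ∀ x : A,
    (TensorProduct.rid S A) ((TensorProduct.map (LinearMap.id : A →ₗ[S] A) cou) (cop x)) = x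
  comul_parity : ∀ i : ZMod 2, ∀ x ∈ g i, cop x ∈
    Submodule.span S {t : A ⊗[S] A | ∃ j : ZMod 2, ∃ y ∈ g j, ∃ z ∈ g (i + j), t = y ⊗ₜ[S] z}
  counit_odd : ∀ x ∈ g 1, cou x = 0

/-- `St` is an antipode for the superbialgebra `(A, cop, cou)`. -/
def IsAntipode (cop : A →ₗ[S] A ⊗[S] A) (cou : A →ₗ[S] S) (St : A →ₗ[S] A) : Prop :=
  (∀ x : A, (LinearMap.mul' S A)
      ((TensorProduct.map St (LinearMap.id : A →ₗ[S] A)) (cop x)) = algebraMap S A (cou x)) ∧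
  (∀ x : A, (LinearMap.mul' S A)
      ((TensorProduct.map (LinearMap.id : A →ₗ[S] A) St) (cop x)) = algebraMap S A (cou x))

/-- The two-sided ideal generated by a set `T`, as a submodule. -/
def tsi (T : Set A) : Submodule S A :=
  Submodule.span S {x : A | ∃ a b : A, ∃ s ∈ T, x = a * s * b}

/-- `A` is topologically generated by `T` with respect to the filtration `Fl`. -/
def TopGenBy (Fl : ℕ → Submodule S A) (T : Set A) : Prop :=
  ∀ a : A, ∀ N : ℕ, ∃ b ∈ Algebra.adjoin S T, a - b ∈ Fl N

end Alg

section Mod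
variable (M : Type) [AddCommGroup M] [Module S M]

/-- The `r`-adic filtration on a module. -/
def adicFil (r : S) (N : ℕ) : Submodule S M :=
  Submodule.span S {x : M | ∃ y : M, x = r ^ N • y}

/-- Separatedness and completeness with respect to a filtration of submodules. -/
def CompleteWRT (Fl : ℕ → Submodule S M) : Prop :=
  (∀ x : M, (∀ N, x ∈ Fl N) → x = 0) ∧
  (∀ f : ℕ → M, (∀ N, f (N + 1) - f N ∈ Fl N) → ∃ x : M, ∀ N, x - f N ∈ Fl N)

/-- A representation of a tensor `t ∈ M ⊗ M` as a finite sum of pure tensors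
with homogeneous factors (of the prescribed parities). -/
def Rep (g : ZMod 2 → Submodule S M) (t : M ⊗[S] M) (ι : Type) (s : Finset ι)
    (a b : ι → M) (pa pb : ι → ZMod 2) : Prop :=
  t = ∑ i ∈ s, a i ⊗ₜ[S] b i ∧ ∀ i ∈ s, a i ∈ g (pa i) ∧ b i ∈ g (pb i)

/-- A homogeneous representation of the double coproduct `(Δ ⊗ id)(Δ x)`. -/
def Rep3 (g : ZMod 2 → Submodule S M) (cop : M →ₗ[S] M ⊗[S] M) (x : M) (ι : Type)
    (s : Finset ι) (a b c : ι → M) (pa pb pc : ι → ZMod 2) : Prop :=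
  ((TensorProduct.map cop (LinearMap.id : M →ₗ[S] M)) (cop x)
      = ∑ i ∈ s, (a i ⊗ₜ[S] b i) ⊗ₜ[S] c i) ∧
  ∀ i ∈ s, a i ∈ g (pa i) ∧ b i ∈ g (pb i) ∧ c i ∈ g (pc i)

/-- `σ'` is a convolution inverse of the bilinear form `σ` (with Koszul signs). -/
def ConvInverse (g : ZMod 2 → Submodule S M) (cop : M →ₗ[S] M ⊗[S] M) (cou : M →ₗ[S] S)
    (σ σ' : M →ₗ[S] M →ₗ[S] S) : Prop :=
  ∀ x y : M, ∀ (ι : Type) (s : Finset ι) (a b : ι → M) (pa pb : ι → ZMod 2),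
    Rep S M g (cop x) ι s a b pa pb →
    ∀ (ι' : Type) (s' : Finset ι') (c d : ι' → M) (pc pd : ι' → ZMod 2),
      Rep S M g (cop y) ι' s' c d pc pd →
    (∑ i ∈ s, ∑ j ∈ s', sg S (pb i * pc j) * (σ (a i) (c j) * σ' (b i) (d j))
        = cou x * cou y) ∧
    (∑ i ∈ s, ∑ j ∈ s', sg S (pb i * pc j) * (σ' (a i) (c j) * σ (b i) (d j))
        = cou x * cou y)

/-- `σ` is a (normalized, convolution-invertible) 2-cocycle for the
super-coalgebra-with-multiplication `(M, mul, one, cop, cou)`;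
the Sweedler-type identities are expressed through homogeneous representations
of the coproducts (with Koszul signs). -/
structure Is2Cocycle (g : ZMod 2 → Submodule S M) (mul : M → M → M) (one : M)
    (cop : M →ₗ[S] M ⊗[S] M) (cou : M →ₗ[S] S) (σ : M →ₗ[S] M →ₗ[S] S) : Prop where
  norm_right : ∀ x : M, σ x one = cou x
  norm_left : ∀ x : M, σ one x = cou x
  conv_inv : ∃ σ' : M →ₗ[S] M →ₗ[S] S, ConvInverse S M g cop cou σ σ'
  cocycle : ∀ x y z : M,
    ∀ (ι : Type) (s : Finset ι) (a b : ι → M) (pa pb : ι → ZMod 2),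
      Rep S M g (cop x) ι s a b pa pb →
    ∀ (ι' : Type) (s' : Finset ι') (c d : ι' → M) (pc pd : ι' → ZMod 2),
      Rep S M g (cop y) ι' s' c d pc pd →
    ∀ (ι'' : Type) (s'' : Finset ι'') (u v : ι'' → M) (pu pv : ι'' → ZMod 2),
      Rep S M g (cop z) ι'' s'' u v pu pv →
    ∑ i ∈ s, ∑ j ∈ s', sg S (pb i * pc j) * (σ (a i) (c j) * σ (mul (b i) (d j)) z)
      = ∑ j ∈ s', ∑ l ∈ s'', sg S (pd j * pu l) * (σ (c j) (u l) * σ x (mul (d j) (v l)))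

/-- `mulσ` is the 2-cocycle deformation of the product `mul` by the 2-cocycle `σ`
(with convolution inverse `σ'`):  `x ·σ y = σ(x₁,y₁) x₂y₂ σ'(x₃,y₃)`
(with Koszul signs), expressed through homogeneous representations. -/
def IsCocycleDeform (g : ZMod 2 → Submodule S M) (mul : M → M → M)
    (cop : M →ₗ[S] M ⊗[S] M) (σ σ' : M →ₗ[S] M →ₗ[S] S) (mulσ : M → M → M) : Prop :=
  ∀ x y : M,
    ∀ (ι : Type) (s : Finset ι) (a b c : ι → M) (pa pb pc : ι → ZMod 2),
      Rep3 S M g cop x ι s a b c pa pb pc →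
    ∀ (ι' : Type) (s' : Finset ι') (d e f : ι' → M) (pd pe pf : ι' → ZMod 2),
      Rep3 S M g cop y ι' s' d e f pd pe pf →
    mulσ x y = ∑ i ∈ s, ∑ j ∈ s',
      (sg S (pd j * (pb i + pc i) + pe j * pc i) * (σ (a i) (d j) * σ' (c i) (f j)))
        • mul (b i) (e j)

/-- Iterated powers with respect to a bilinear multiplication map. -/
def spow (m2 : M →ₗ[S] M →ₗ[S] M) (one : M) (z : M) : ℕ → M
  | 0 => one
  | (m + 1) => m2 z (spow m2 one z m)

end Mod

section Pairing
variable (Fc : Type) [Ring Fc] [Algebra S Fc] (Uc : Type) [Ring Uc] [Algebra S Uc]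

/-- `B2` extends the pairing `B` to tensor squares with the Koszul sign rule:
`⟨f₁ ⊗ f₂ , u₁ ⊗ u₂⟩ = (−1)^{|f₂||u₁|} ⟨f₁,u₁⟩⟨f₂,u₂⟩`. -/
def IsPairing2 (gF : ZMod 2 → Submodule S Fc) (gU : ZMod 2 → Submodule S Uc)
    (B : Fc →ₗ[S] Uc →ₗ[S] S)
    (B2 : (Fc ⊗[S] Fc) →ₗ[S] (Uc ⊗[S] Uc) →ₗ[S] S) : Prop :=
  ∀ (pf pu : ZMod 2) (f1 f2 : Fc) (u1 u2 : Uc), f2 ∈ gF pf → u1 ∈ gU pu →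
    B2 (f1 ⊗ₜ[S] f2) (u1 ⊗ₜ[S] u2) = sg S (pf * pu) * (B f1 u1 * B f2 u2)

/-- A pairing of superbialgebras: product on one side is dual to coproduct on
the other (with Koszul signs), and units/counits correspond. -/
structure IsBialgPairing (gF : ZMod 2 → Submodule S Fc) (gU : ZMod 2 → Submodule S Uc)
    (copF : Fc →ₗ[S] Fc ⊗[S] Fc) (couF : Fc →ₗ[S] S)
    (copU : Uc →ₗ[S] Uc ⊗[S] Uc) (couU : Uc →ₗ[S] S)
    (B : Fc →ₗ[S] Uc →ₗ[S] S)
    (B2 : (Fc ⊗[S] Fc) →ₗ[S] (Uc ⊗[S] Uc) →ₗ[S] S) : Prop where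
  pair2 : IsPairing2 S Fc Uc gF gU B B2
  mulU : ∀ (f : Fc) (u u' : Uc), B f (u * u') = B2 (copF f) (u ⊗ₜ[S] u')
  mulF : ∀ (f f' : Fc) (u : Uc), B (f * f') u = B2 (f ⊗ₜ[S] f') (copU u)
  oneU : ∀ f : Fc, B f 1 = couF f
  oneF : ∀ u : Uc, B 1 u = couU u

/-- Non-degeneracy of a pairing. -/
def Nondeg (B : Fc →ₗ[S] Uc →ₗ[S] S) : Prop :=
  (∀ f : Fc, (∀ u : Uc, B f u = 0) → f = 0) ∧
  (∀ u : Uc, (∀ f : Fc, B f u = 0) → u = 0)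

end Pairing

end Generic

/-! ## The formal setting: base ring `k[[ℏ]]` -/

section Formal
variable (k : Type) [Field k] [CharZero k]

/-- The base ring `k[[ℏ]]`. -/
abbrev Rk := PowerSeries k

/-- `exp(g)` as a power series (intended for `g` with zero constant term). -/
def expOf (g : Rk k) : Rk k :=
  PowerSeries.mk fun m =>
    ∑ j ∈ Finset.range (m + 1), ((j.factorial : k)⁻¹) * (PowerSeries.coeff m (g ^ j))

/-- `q := exp ℏ`. -/
def qq : Rk k := expOf k PowerSeries.X

/-- `q⁻¹ = exp (−ℏ)`. -/
def qqInv : Rk k := expOf k (-PowerSeries.X)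

/-- `q_s := q^{(−1)^{p(s)}}`. -/
def qpar (p : ℕ → ZMod 2) (s : ℕ) : Rk k := if p s = 0 then qq k else qqInv k

/-- `q_s⁻¹ = q^{−(−1)^{p(s)}}`. -/
def qparInv (p : ℕ → ZMod 2) (s : ℕ) : Rk k := if p s = 0 then qqInv k else qq k

/-- The ℏ-adic filtration on a `k[[ℏ]]`-module. -/
def hFil (M : Type) [AddCommGroup M] [Module (Rk k) M] : ℕ → Submodule (Rk k) M :=
  adicFil (Rk k) M (PowerSeries.X)

/-- `u = exp(ℏ a)`, expressed through ℏ-adic approximation by the partial sums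
`∑_{m<N} (ℏ^m/m!) a^m`. -/
def IsExp (A : Type) [Ring A] [Algebra (Rk k) A] (u a : A) : Prop :=
  ∀ N : ℕ, u - ∑ m ∈ Finset.range N,
      algebraMap (Rk k) A (PowerSeries.C ((m.factorial : k)⁻¹) * PowerSeries.X ^ m) * a ^ m
    ∈ hFil k A N

variable (n : ℕ) (p : ℕ → ZMod 2)

section YamDefs
variable (A : Type) [Ring A] [Algebra (Rk k) A]

/-- `H_i := (−1)^{p(i)} Γ_i − (−1)^{p(i+1)} Γ_{i+1}`. -/
def Hcar (Γg : ℕ → A) (i : ℕ) : A :=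
  sg (Rk k) (p i) • Γg i - sg (Rk k) (p (i + 1)) • Γg (i + 1)

/-- The defining relations (2.1)–(2.7) of Yamane's QUESA `U_ℏ(gl_n^p)`, for elements
`E, Γg, F` of an ℏ-adically complete superalgebra `A`, where `expl a` denotes
`exp(ℏ a)`.  The relation `[E_i,F_j] = δ_{ij} (e^{ℏH_i}−e^{−ℏH_i})/(q_i−q_i⁻¹)` is
stated multiplied through by `q_i − q_i⁻¹` (`A` being ℏ-torsion free). -/
structure YamaneRels (E Γg F : ℕ → A) (expl : A → A) : Prop where
  relΓΓ : ∀ k' ∈ Finset.Icc 1 n, ∀ l ∈ Finset.Icc 1 n, Γg k' * Γg l = Γg l * Γg k'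
  relΓE : ∀ k' ∈ Finset.Icc 1 n, ∀ j ∈ Finset.Icc 1 (n - 1),
    Γg k' * E j - E j * Γg k'
      = (((if k' = j then 1 else 0) - (if k' = j + 1 then 1 else 0) : Rk k)) • E j
  relΓF : ∀ k' ∈ Finset.Icc 1 n, ∀ j ∈ Finset.Icc 1 (n - 1),
    Γg k' * F j - F j * Γg k'
      = (((if k' = j + 1 then 1 else 0) - (if k' = j then 1 else 0) : Rk k)) • F j
  relEF : ∀ i ∈ Finset.Icc 1 (n - 1), ∀ j ∈ Finset.Icc 1 (n - 1),
    (qpar k p i - qparInv k p i) •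
        (E i * F j - sg (Rk k) (pp p i (i + 1) * pp p j (j + 1)) • (F j * E i))
      = (if i = j then (1 : Rk k) else 0) •
          (expl (Hcar k p A Γg i) - expl (-Hcar k p A Γg i))
  relSq : ∀ i ∈ Finset.Icc 1 (n - 1), pp p i (i + 1) = 1 → E i ^ 2 = 0 ∧ F i ^ 2 = 0
  relEE : ∀ i ∈ Finset.Icc 1 (n - 1), ∀ j ∈ Finset.Icc 1 (n - 1), (i + 1 < j ∨ j + 1 < i) →
    E i * E j = sg (Rk k) (pp p i (i + 1) * pp p j (j + 1)) • (E j * E i)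
  relFF : ∀ i ∈ Finset.Icc 1 (n - 1), ∀ j ∈ Finset.Icc 1 (n - 1), (i + 1 < j ∨ j + 1 < i) →
    F i * F j = sg (Rk k) (pp p i (i + 1) * pp p j (j + 1)) • (F j * F i)
  relSerreE : ∀ i ∈ Finset.Icc 1 (n - 1), ∀ j ∈ Finset.Icc 1 (n - 1),
    pp p i (i + 1) = 0 → (j = i + 1 ∨ i = j + 1) →
    E i ^ 2 * E j - (qq k + qqInv k) • (E i * E j * E i) + E j * E i ^ 2 = 0
  relSerreF : ∀ i ∈ Finset.Icc 1 (n - 1), ∀ j ∈ Finset.Icc 1 (n - 1),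
    pp p i (i + 1) = 0 → (j = i + 1 ∨ i = j + 1) →
    F i ^ 2 * F j - (qq k + qqInv k) • (F i * F j * F i) + F j * F i ^ 2 = 0
  relHighE : ∀ i : ℕ, 1 ≤ i → i + 2 ≤ n - 1 → pp p (i + 1) (i + 2) = 1 →
    let a := E i
    let b := E (i + 1)
    let c := E (i + 2)
    let pa := pp p i (i + 1)
    let pb := pp p (i + 1) (i + 2)
    let pc := pp p (i + 2) (i + 3)
    let X1 := a * b - (qpar k p (i + 1) * sg (Rk k) (pa * pb)) • (b * a)
    let X2 := X1 * c - (qpar k p (i + 2) * sg (Rk k) ((pa + pb) * pc)) • (c * X1)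
    X2 * b - sg (Rk k) ((pa + pb + pc) * pb) • (b * X2) = 0
  relHighF : ∀ i : ℕ, 1 ≤ i → i + 2 ≤ n - 1 → pp p (i + 1) (i + 2) = 1 →
    let a := F i
    let b := F (i + 1)
    let c := F (i + 2)
    let pa := pp p i (i + 1)
    let pb := pp p (i + 1) (i + 2)
    let pc := pp p (i + 2) (i + 3)
    let X1 := a * b - (qpar k p (i + 1) * sg (Rk k) (pa * pb)) • (b * a)
    let X2 := X1 * c - (qpar k p (i + 2) * sg (Rk k) ((pa + pb) * pc)) • (c * X1)
    X2 * b - sg (Rk k) ((pa + pb + pc) * pb) • (b * X2) = 0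

end YamDefs

/-- Yamane's QUESA `U_ℏ(gl_n^p)`: an ℏ-adically complete topological superalgebra
over `k[[ℏ]]`, topologically generated by `E_i, Γ_k, F_i` subject to the relations
(2.1)–(2.7), together with its universal property among complete superalgebras. -/
structure YamaneAlg where
  A : Type
  [ringA : Ring A]
  [algA : Algebra (Rk k) A]
  g : ZMod 2 → Submodule (Rk k) A
  grading : SuperGrading (Rk k) A g
  E : ℕ → A
  Γg : ℕ → A
  F : ℕ → A
  /-- `expl a = exp(ℏ a)`. -/
  expl : A → A
  expl_spec : ∀ a : A, IsExp k A (expl a) a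
  parE : ∀ i ∈ Finset.Icc 1 (n - 1), E i ∈ g (pp p i (i + 1))
  parΓ : ∀ s ∈ Finset.Icc 1 n, Γg s ∈ g 0
  parF : ∀ i ∈ Finset.Icc 1 (n - 1), F i ∈ g (pp p i (i + 1))
  rels : YamaneRels k n p A E Γg F expl
  complete : CompleteWRT (Rk k) A (hFil k A)
  torsionfree : ∀ a : A, (PowerSeries.X : Rk k) • a = 0 → a = 0
  topgen : TopGenBy (Rk k) A (hFil k A)
    ({x : A | ∃ i ∈ Finset.Icc 1 (n - 1), x = E i}
      ∪ {x : A | ∃ s ∈ Finset.Icc 1 n, x = Γg s}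
      ∪ {x : A | ∃ i ∈ Finset.Icc 1 (n - 1), x = F i})
  univ : ∀ (B : Type) [Ring B] [Algebra (Rk k) B] (E' Γ' F' : ℕ → B) (expl' : B → B),
    (∀ b : B, IsExp k B (expl' b) b) →
    YamaneRels k n p B E' Γ' F' expl' →
    CompleteWRT (Rk k) B (hFil k B) →
    ∃ φ : A →ₐ[Rk k] B,
      (∀ i ∈ Finset.Icc 1 (n - 1), φ (E i) = E' i) ∧
      (∀ s ∈ Finset.Icc 1 n, φ (Γg s) = Γ' s) ∧
      (∀ i ∈ Finset.Icc 1 (n - 1), φ (F i) = F' i)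

attribute [instance] YamaneAlg.ringA YamaneAlg.algA

/-- The formulas of Theorem 2.4 for the standard Hopf superalgebra structure of
Yamane's QUESA, on the generators. -/
def YamaneHopfFormulas (U : YamaneAlg k n p)
    (cop : U.A →ₗ[Rk k] U.A ⊗[Rk k] U.A) (cou : U.A →ₗ[Rk k] Rk k)
    (St : U.A →ₗ[Rk k] U.A) : Prop :=
  (∀ i ∈ Finset.Icc 1 (n - 1),
      cop (U.E i) = U.E i ⊗ₜ[Rk k] (1 : U.A) + U.expl (Hcar k p U.A U.Γg i) ⊗ₜ[Rk k] U.E i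
    ∧ St (U.E i) = -(U.expl (-Hcar k p U.A U.Γg i) * U.E i)
    ∧ cou (U.E i) = 0) ∧
  (∀ s ∈ Finset.Icc 1 n,
      cop (U.Γg s) = U.Γg s ⊗ₜ[Rk k] (1 : U.A) + (1 : U.A) ⊗ₜ[Rk k] U.Γg s
    ∧ St (U.Γg s) = -U.Γg s
    ∧ cou (U.Γg s) = 0) ∧
  (∀ i ∈ Finset.Icc 1 (n - 1),
      cop (U.F i) = U.F i ⊗ₜ[Rk k] U.expl (-Hcar k p U.A U.Γg i) + (1 : U.A) ⊗ₜ[Rk k] U.F i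
    ∧ St (U.F i) = -(U.F i * U.expl (Hcar k p U.A U.Γg i))
    ∧ cou (U.F i) = 0)

/-- Yamane's QUESA together with its standard topological Hopf superalgebra structure. -/
structure YamaneHopf extends YamaneAlg k n p where
  m2 : (A ⊗[Rk k] A) →ₗ[Rk k] (A ⊗[Rk k] A) →ₗ[Rk k] (A ⊗[Rk k] A)
  cop : A →ₗ[Rk k] A ⊗[Rk k] A
  cou : A →ₗ[Rk k] Rk k
  ant : A →ₗ[Rk k] A
  bialg : IsSuperBialg (Rk k) A g m2 cop cou
  antipode : IsAntipode (Rk k) A cop cou ant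
  formulas : YamaneHopfFormulas k n p toYamaneAlg cop cou ant

/-! ### The QFSHSA `F_ℏ[[GL_n^p]]` -/

section FGLDefs
variable (A : Type) [Ring A] [Algebra (Rk k) A]

/-- The defining relations of `F_ℏ[[GL_n^p]]` (Theorem 3.3(a)). -/
structure FGLRels (x : ℕ → ℕ → A) : Prop where
  sq : ∀ i ∈ Finset.Icc 1 n, ∀ j ∈ Finset.Icc 1 n, pp p i j = 1 → x i j ^ 2 = 0
  row : ∀ i ∈ Finset.Icc 1 n, ∀ j ∈ Finset.Icc 1 n, ∀ k' ∈ Finset.Icc 1 n, j < k' →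
    x i j * x i k' = (sg (Rk k) (pp p i j * pp p i k') * qpar k p i) • (x i k' * x i j)
  col : ∀ i ∈ Finset.Icc 1 n, ∀ h ∈ Finset.Icc 1 n, ∀ j ∈ Finset.Icc 1 n, i < h →
    x i j * x h j = (sg (Rk k) (pp p i j * pp p h j) * qpar k p j) • (x h j * x i j)
  anti : ∀ i ∈ Finset.Icc 1 n, ∀ h ∈ Finset.Icc 1 n, ∀ j ∈ Finset.Icc 1 n,
    ∀ k' ∈ Finset.Icc 1 n, i < h → k' < j →
    x i j * x h k' = sg (Rk k) (pp p i j * pp p h k') • (x h k' * x i j)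
  syn : ∀ i ∈ Finset.Icc 1 n, ∀ h ∈ Finset.Icc 1 n, ∀ j ∈ Finset.Icc 1 n,
    ∀ k' ∈ Finset.Icc 1 n, i < h → j < k' →
    x i j * x h k' = sg (Rk k) (pp p i j * pp p h k') • (x h k' * x i j)
      + (sg (Rk k) (pp p i j * pp p i k') * (qpar k p i - qparInv k p i)) • (x i k' * x h j)

/-- The `I_ℏ`-adic filtration, `I_ℏ` being the two-sided ideal generated by the
`x_{ij} − δ_{ij}` together with `ℏ·1`. -/
def IhFil (x : ℕ → ℕ → A) (N : ℕ) : Submodule (Rk k) A :=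
  (tsi (Rk k) A
    ({a : A | ∃ i ∈ Finset.Icc 1 n, ∃ j ∈ Finset.Icc 1 n,
        a = x i j - (if i = j then (1 : A) else 0)}
      ∪ {(PowerSeries.X : Rk k) • (1 : A)})) ^ N

end FGLDefs

/-- The quantum formal series Hopf superalgebra `F_ℏ[[GL_n^p]]` of Theorem 3.3:
a topological superbialgebra over `k[[ℏ]]`, topologically generated by the
`x_{ij}` subject to the relations (a), `I_ℏ`-adically complete, with coproduct
and counit (c), and universal among such objects. -/
structure FGLAlg where
  A : Type
  [ringA : Ring A]
  [algA : Algebra (Rk k) A]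
  g : ZMod 2 → Submodule (Rk k) A
  x : ℕ → ℕ → A
  parx : ∀ i ∈ Finset.Icc 1 n, ∀ j ∈ Finset.Icc 1 n, x i j ∈ g (pp p i j)
  rels : FGLRels k n p A x
  m2 : (A ⊗[Rk k] A) →ₗ[Rk k] (A ⊗[Rk k] A) →ₗ[Rk k] (A ⊗[Rk k] A)
  cop : A →ₗ[Rk k] A ⊗[Rk k] A
  cou : A →ₗ[Rk k] Rk k
  bialg : IsSuperBialg (Rk k) A g m2 cop cou
  copx : ∀ i ∈ Finset.Icc 1 n, ∀ j ∈ Finset.Icc 1 n,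
    cop (x i j)
      = ∑ a ∈ Finset.Icc 1 n, sg (Rk k) (pp p i a * pp p a j) • (x i a ⊗ₜ[Rk k] x a j)
  coux : ∀ i ∈ Finset.Icc 1 n, ∀ j ∈ Finset.Icc 1 n,
    cou (x i j) = if i = j then 1 else 0
  complete : CompleteWRT (Rk k) A (IhFil k n A x)
  torsionfree : ∀ a : A, (PowerSeries.X : Rk k) • a = 0 → a = 0
  topgen : TopGenBy (Rk k) A (IhFil k n A x)
    {a : A | ∃ i ∈ Finset.Icc 1 n, ∃ j ∈ Finset.Icc 1 n, a = x i j}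
  univ : ∀ (B : Type) [Ring B] [Algebra (Rk k) B] (y : ℕ → ℕ → B),
    FGLRels k n p B y → CompleteWRT (Rk k) B (IhFil k n B y) →
    ∃ φ : A →ₐ[Rk k] B, ∀ i ∈ Finset.Icc 1 n, ∀ j ∈ Finset.Icc 1 n, φ (x i j) = y i j

attribute [instance] FGLAlg.ringA FGLAlg.algA

/-- The values of the Hopf pairing on the generators (3.16)/(3.21). -/
def PairGenVals (Ua : YamaneAlg k n p) (FA : Type) [Ring FA] [Algebra (Rk k) FA]
    (x : ℕ → ℕ → FA) (B : FA →ₗ[Rk k] Ua.A →ₗ[Rk k] Rk k) : Prop :=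
  ∀ i ∈ Finset.Icc 1 n, ∀ j ∈ Finset.Icc 1 n,
    (∀ t ∈ Finset.Icc 1 (n - 1),
      B (x i j) (Ua.E t) = (if i = t ∧ j = t + 1 then 1 else 0) ∧
      B (x i j) (Ua.F t) = (if i = t + 1 ∧ j = t then 1 else 0)) ∧
    (∀ kk ∈ Finset.Icc 1 n, B (x i j) (Ua.Γg kk) = (if i = kk ∧ j = kk then 1 else 0))

/-! ### Multiparametric objects -/

section PhiDefs
variable (A : Type) [Ring A] [Algebra (Rk k) A]

/-- `T_{i,+}^Φ := 2⁻¹ ∑_ℓ (φ_{i,ℓ} − φ_{i+1,ℓ}) Γ_ℓ`. -/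
def Tpl (Γg : ℕ → A) (φ : ℕ → ℕ → Rk k) (i : ℕ) : A :=
  ∑ l ∈ Finset.Icc 1 n, (PowerSeries.C ((2 : k)⁻¹) * (φ i l - φ (i + 1) l)) • Γg l

/-- `T_{i,−}^Φ := 2⁻¹ ∑_ℓ (φ_{ℓ,i} − φ_{ℓ,i+1}) Γ_ℓ`. -/
def Tmn (Γg : ℕ → A) (φ : ℕ → ℕ → Rk k) (i : ℕ) : A :=
  ∑ l ∈ Finset.Icc 1 n, (PowerSeries.C ((2 : k)⁻¹) * (φ l i - φ l (i + 1))) • Γg l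

/-- The defining relations of the multiparametric QFSHSA `F_ℏ^Φ[[GL_n^p]]`
(Theorem 3.10(a)), with `q_{r,s} := e^{ℏ φ_{r,s}}`. -/
structure FGLPhiRels (φ : ℕ → ℕ → Rk k) (x : ℕ → ℕ → A) : Prop where
  sq : ∀ i ∈ Finset.Icc 1 n, ∀ j ∈ Finset.Icc 1 n, pp p i j = 1 → x i j ^ 2 = 0
  row : ∀ i ∈ Finset.Icc 1 n, ∀ j ∈ Finset.Icc 1 n, ∀ k' ∈ Finset.Icc 1 n, j < k' →
    x i j * x i k'
      = (sg (Rk k) (pp p i j * pp p i k') * qpar k p i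
          * expOf k (-(PowerSeries.X * φ j k'))) • (x i k' * x i j)
  col : ∀ i ∈ Finset.Icc 1 n, ∀ h ∈ Finset.Icc 1 n, ∀ j ∈ Finset.Icc 1 n, i < h →
    x i j * x h j
      = (sg (Rk k) (pp p i j * pp p h j) * qpar k p j
          * expOf k (PowerSeries.X * φ i h)) • (x h j * x i j)
  anti : ∀ i ∈ Finset.Icc 1 n, ∀ h ∈ Finset.Icc 1 n, ∀ j ∈ Finset.Icc 1 n,
    ∀ k' ∈ Finset.Icc 1 n, i < h → k' < j →
    x i j * x h k'
      = (sg (Rk k) (pp p i j * pp p h k') * expOf k (PowerSeries.X * φ i h)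
          * expOf k (-(PowerSeries.X * φ j k'))) • (x h k' * x i j)
  syn : ∀ i ∈ Finset.Icc 1 n, ∀ h ∈ Finset.Icc 1 n, ∀ j ∈ Finset.Icc 1 n,
    ∀ k' ∈ Finset.Icc 1 n, i < h → j < k' →
    x i j * x h k'
      = (sg (Rk k) (pp p i j * pp p h k') * expOf k (PowerSeries.X * φ i h)
          * expOf k (-(PowerSeries.X * φ j k'))) • (x h k' * x i j)
        + (sg (Rk k) (pp p i j * pp p i k') * (qpar k p i - qparInv k p i)
            * expOf k (-(PowerSeries.X * φ j k'))) • (x i k' * x h j)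

end PhiDefs

/-- The multiparametric QFSHSA `F_ℏ^Φ[[GL_n^p]]` of Theorem 3.10. -/
structure FGLPhiAlg (φ : ℕ → ℕ → Rk k) where
  A : Type
  [ringA : Ring A]
  [algA : Algebra (Rk k) A]
  g : ZMod 2 → Submodule (Rk k) A
  x : ℕ → ℕ → A
  parx : ∀ i ∈ Finset.Icc 1 n, ∀ j ∈ Finset.Icc 1 n, x i j ∈ g (pp p i j)
  rels : FGLPhiRels k n p A φ x
  m2 : (A ⊗[Rk k] A) →ₗ[Rk k] (A ⊗[Rk k] A) →ₗ[Rk k] (A ⊗[Rk k] A)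
  cop : A →ₗ[Rk k] A ⊗[Rk k] A
  cou : A →ₗ[Rk k] Rk k
  bialg : IsSuperBialg (Rk k) A g m2 cop cou
  copx : ∀ i ∈ Finset.Icc 1 n, ∀ j ∈ Finset.Icc 1 n,
    cop (x i j)
      = ∑ a ∈ Finset.Icc 1 n, sg (Rk k) (pp p i a * pp p a j) • (x i a ⊗ₜ[Rk k] x a j)
  coux : ∀ i ∈ Finset.Icc 1 n, ∀ j ∈ Finset.Icc 1 n,
    cou (x i j) = if i = j then 1 else 0
  complete : CompleteWRT (Rk k) A (IhFil k n A x)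
  torsionfree : ∀ a : A, (PowerSeries.X : Rk k) • a = 0 → a = 0
  topgen : TopGenBy (Rk k) A (IhFil k n A x)
    {a : A | ∃ i ∈ Finset.Icc 1 n, ∃ j ∈ Finset.Icc 1 n, a = x i j}
  univ : ∀ (B : Type) [Ring B] [Algebra (Rk k) B] (y : ℕ → ℕ → B),
    FGLPhiRels k n p B φ y → CompleteWRT (Rk k) B (IhFil k n B y) →
    ∃ ψ : A →ₐ[Rk k] B, ∀ i ∈ Finset.Icc 1 n, ∀ j ∈ Finset.Icc 1 n, ψ (x i j) = y i j

attribute [instance] FGLPhiAlg.ringA FGLPhiAlg.algA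

/-- The formulas of Theorem 2.7 for the multiparametric Hopf structure on the
generators of `U_ℏ^Φ(gl_n^p)`. -/
def YamanePhiFormulas (φ : ℕ → ℕ → Rk k) (U : YamaneAlg k n p)
    (cop : U.A →ₗ[Rk k] U.A ⊗[Rk k] U.A) (cou : U.A →ₗ[Rk k] Rk k)
    (St : U.A →ₗ[Rk k] U.A) : Prop :=
  (∀ i ∈ Finset.Icc 1 (n - 1),
      cop (U.E i)
        = U.E i ⊗ₜ[Rk k] U.expl (Tpl k n U.A U.Γg φ i)
          + U.expl (Hcar k p U.A U.Γg i + Tmn k n U.A U.Γg φ i) ⊗ₜ[Rk k] U.E i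
    ∧ cou (U.E i) = 0
    ∧ St (U.E i)
        = -(U.expl (-(Hcar k p U.A U.Γg i + Tmn k n U.A U.Γg φ i)) * U.E i
            * U.expl (-Tpl k n U.A U.Γg φ i))) ∧
  (∀ s ∈ Finset.Icc 1 n,
      cop (U.Γg s) = U.Γg s ⊗ₜ[Rk k] (1 : U.A) + (1 : U.A) ⊗ₜ[Rk k] U.Γg s
    ∧ cou (U.Γg s) = 0
    ∧ St (U.Γg s) = -U.Γg s) ∧
  (∀ i ∈ Finset.Icc 1 (n - 1),
      cop (U.F i)
        = U.F i ⊗ₜ[Rk k] U.expl (-(Hcar k p U.A U.Γg i + Tpl k n U.A U.Γg φ i))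
          + U.expl (-Tmn k n U.A U.Γg φ i) ⊗ₜ[Rk k] U.F i
    ∧ cou (U.F i) = 0
    ∧ St (U.F i)
        = -(U.expl (Tmn k n U.A U.Γg φ i) * U.F i
            * U.expl (Hcar k p U.A U.Γg i + Tpl k n U.A U.Γg φ i)))

/-- The multiparametric QUESA `U_ℏ^Φ(gl_n^p)`: Yamane's algebra with the twisted
Hopf superalgebra structure of Theorem 2.7. -/
structure YamanePhiHopf (φ : ℕ → ℕ → Rk k) extends YamaneAlg k n p where
  m2 : (A ⊗[Rk k] A) →ₗ[Rk k] (A ⊗[Rk k] A) →ₗ[Rk k] (A ⊗[Rk k] A)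
  cop : A →ₗ[Rk k] A ⊗[Rk k] A
  cou : A →ₗ[Rk k] Rk k
  ant : A →ₗ[Rk k] A
  bialg : IsSuperBialg (Rk k) A g m2 cop cou
  antipode : IsAntipode (Rk k) A cop cou ant
  formulas : YamanePhiFormulas k n p φ toYamaneAlg cop cou ant

/-- The argument `ℏ·2⁻¹ ∑_{t,ℓ} φ_{t,ℓ} Γ_t ⊗ Γ_ℓ` of the exponential defining
the twist `F_Φ`. -/
def twistElt (U : YamaneAlg k n p) (φ : ℕ → ℕ → Rk k) : U.A ⊗[Rk k] U.A :=
  ∑ t ∈ Finset.Icc 1 n, ∑ l ∈ Finset.Icc 1 n,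
    (PowerSeries.C ((2 : k)⁻¹) * (PowerSeries.X * φ t l)) • (U.Γg t ⊗ₜ[Rk k] U.Γg l)

/-- The `N`-th partial sum of the exponential series for the twist
`F_Φ = exp(ℏ·2⁻¹ ∑ φ_{t,ℓ} Γ_t ⊗ Γ_ℓ)`, powers being taken with respect to the
super multiplication `m2` of `U ⊗ U`. -/
def twistPartial (U : YamaneAlg k n p)
    (m2 : (U.A ⊗[Rk k] U.A) →ₗ[Rk k] (U.A ⊗[Rk k] U.A) →ₗ[Rk k] (U.A ⊗[Rk k] U.A))
    (φ : ℕ → ℕ → Rk k) (N : ℕ) : U.A ⊗[Rk k] U.A :=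
  ∑ m ∈ Finset.range N, (PowerSeries.C ((m.factorial : k)⁻¹)) •
    spow (Rk k) (U.A ⊗[Rk k] U.A) m2 ((1 : U.A) ⊗ₜ[Rk k] (1 : U.A)) (twistElt k n p U φ) m

/-- `σ` is the 2-cocycle on `F_ℏ[[GL_n^p]]` obtained by evaluation against the
twist `F_Φ`, i.e. `σ(φ,ψ) = ⟨φ ⊗ ψ, F_Φ⟩`, expressed through ℏ-adic approximation
by the partial sums of the exponential series. -/
def IsTwistEval (Ua : YamaneAlg k n p)
    (m2 : (Ua.A ⊗[Rk k] Ua.A) →ₗ[Rk k] (Ua.A ⊗[Rk k] Ua.A) →ₗ[Rk k] (Ua.A ⊗[Rk k] Ua.A))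
    (FA : Type) [Ring FA] [Algebra (Rk k) FA]
    (B2 : (FA ⊗[Rk k] FA) →ₗ[Rk k] (Ua.A ⊗[Rk k] Ua.A) →ₗ[Rk k] Rk k)
    (φ : ℕ → ℕ → Rk k) (σ : FA →ₗ[Rk k] FA →ₗ[Rk k] Rk k) : Prop :=
  ∀ (f f' : FA) (N : ℕ),
    σ f f' - B2 (f ⊗ₜ[Rk k] f') (twistPartial k n p Ua m2 φ N)
      ∈ adicFil (Rk k) (Rk k) (PowerSeries.X) N

/-! ### PBW monomials and semiclassical limits -/

/-- The ordered monomial `∏ x_{ij}^{e_{ij}}` along the enumeration `l` of the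
index pairs. -/
def monom (A : Type) [Ring A] (x : ℕ → ℕ → A) (l : List (ℕ × ℕ)) (e : (ℕ × ℕ) →₀ ℕ) : A :=
  (l.map fun ij => x ij.1 ij.2 ^ e ij).prod

/-- Exponent patterns of truncated monomials: supported in `I_n × I_n`, with
exponent at most 1 at odd places. -/
def TruncSet : Set ((ℕ × ℕ) →₀ ℕ) :=
  {e | (∀ ij : ℕ × ℕ, e ij ≠ 0 → ij.1 ∈ Finset.Icc 1 n ∧ ij.2 ∈ Finset.Icc 1 n) ∧
       ∀ ij : ℕ × ℕ, pp p ij.1 ij.2 = 1 → e ij ≤ 1}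

/-- `l` enumerates the index set `I_n × I_n` (in some chosen total order). -/
def IsEnum (l : List (ℕ × ℕ)) : Prop :=
  l.Nodup ∧ ∀ ij : ℕ × ℕ, ij ∈ l ↔ (ij.1 ∈ Finset.Icc 1 n ∧ ij.2 ∈ Finset.Icc 1 n)

/-- The relation whose `RingQuot` is the semiclassical limit `A/ℏA`. -/
def modh (A : Type) [Ring A] [Algebra (Rk k) A] : A → A → Prop :=
  fun a b => b = 0 ∧ ∃ y : A, a = (PowerSeries.X : Rk k) • y

/-- The classical formal function superalgebra `F[[GL_n^p]] = U(gl_n^p)^*`: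
the supercommutative formal series superalgebra over `k` on the matrix
coordinates `x_{ij}`, with its standard superbialgebra structure. -/
structure ClassFGL where
  A : Type
  [ringA : Ring A]
  [algA : Algebra k A]
  g : ZMod 2 → Submodule k A
  x : ℕ → ℕ → A
  parx : ∀ i ∈ Finset.Icc 1 n, ∀ j ∈ Finset.Icc 1 n, x i j ∈ g (pp p i j)
  sq : ∀ i ∈ Finset.Icc 1 n, ∀ j ∈ Finset.Icc 1 n, pp p i j = 1 → x i j ^ 2 = 0
  scomm : ∀ i ∈ Finset.Icc 1 n, ∀ h ∈ Finset.Icc 1 n, ∀ j ∈ Finset.Icc 1 n,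
    ∀ k' ∈ Finset.Icc 1 n,
    x i j * x h k' = sg k (pp p i j * pp p h k') • (x h k' * x i j)
  m2 : (A ⊗[k] A) →ₗ[k] (A ⊗[k] A) →ₗ[k] (A ⊗[k] A)
  cop : A →ₗ[k] A ⊗[k] A
  cou : A →ₗ[k] k
  bialg : IsSuperBialg k A g m2 cop cou
  copx : ∀ i ∈ Finset.Icc 1 n, ∀ j ∈ Finset.Icc 1 n,
    cop (x i j) = ∑ a ∈ Finset.Icc 1 n, sg k (pp p i a * pp p a j) • (x i a ⊗ₜ[k] x a j)
  coux : ∀ i ∈ Finset.Icc 1 n, ∀ j ∈ Finset.Icc 1 n, cou (x i j) = if i = j then 1 else 0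
  complete : CompleteWRT k A
    (fun N => (tsi k A {a : A | ∃ i ∈ Finset.Icc 1 n, ∃ j ∈ Finset.Icc 1 n,
        a = x i j - (if i = j then (1 : A) else 0)}) ^ N)
  topgen : TopGenBy k A
    (fun N => (tsi k A {a : A | ∃ i ∈ Finset.Icc 1 n, ∃ j ∈ Finset.Icc 1 n,
        a = x i j - (if i = j then (1 : A) else 0)}) ^ N)
    {a : A | ∃ i ∈ Finset.Icc 1 n, ∃ j ∈ Finset.Icc 1 n, a = x i j}
  univ : ∀ (B : Type) [Ring B] [Algebra k B] (y : ℕ → ℕ → B),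
    (∀ i ∈ Finset.Icc 1 n, ∀ j ∈ Finset.Icc 1 n, pp p i j = 1 → y i j ^ 2 = 0) →
    (∀ i ∈ Finset.Icc 1 n, ∀ h ∈ Finset.Icc 1 n, ∀ j ∈ Finset.Icc 1 n,
      ∀ k' ∈ Finset.Icc 1 n,
      y i j * y h k' = sg k (pp p i j * pp p h k') • (y h k' * y i j)) →
    CompleteWRT k B
      (fun N => (tsi k B {a : B | ∃ i ∈ Finset.Icc 1 n, ∃ j ∈ Finset.Icc 1 n,
          a = y i j - (if i = j then (1 : B) else 0)}) ^ N) →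
    ∃ ψ : A →ₐ[k] B, ∀ i ∈ Finset.Icc 1 n, ∀ j ∈ Finset.Icc 1 n, ψ (x i j) = y i j

attribute [instance] ClassFGL.ringA ClassFGL.algA

end Formal

end QGLS

/-!
The exponent `ℏ/2 ∑ φ_{t,ℓ} Γ_t ⊗ Γ_ℓ` of the twist lives in the span of the tensors `u ⊗ v`
of even elements, where all Koszul signs are trivial. Since `x_{ij}` pairs with `Γ_t` only
for `i = j = t`, multiplying by `Γ_t ⊗ Γ_m` multiplies the pairing against
`x_{i,r} ⊗ x_{ℓ,h}` by `δ_{i,t} δ_{ℓ,m}`, so the `m`-th power of the exponent pairs to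
`δ_{i,r} δ_{ℓ,h} (ℏ φ_{i,ℓ}/2)^m` and the partial sums of the twist converge ℏ-adically to
`δ_{i,r} δ_{ℓ,h} e^{ℏ φ_{i,ℓ}/2}`. A form that is diagonal on the generators has a diagonal
convolution inverse with inverted values, and in `σ(x₁,y₁) x₂y₂ σ⁻¹(x₃,y₃)` only the term with
both outer legs on the diagonal survives. Additivity of `expOf` is checked modulo every `ℏ^N`,
where it becomes the exponential of a nilpotent element.
-/

namespace QGLS

open PowerSeries

theorem eq_of_forall_X_pow_dvd_sub {R : Type*} [CommRing R] {a b : R⟦X⟧}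
    (h : ∀ N, (X : R⟦X⟧) ^ N ∣ a - b) : a = b := by
  ext m
  simpa [sub_eq_zero] using X_pow_dvd_iff.mp (h (m + 1)) m m.lt_succ_self

theorem eq_of_forall_mk_eq {R : Type*} [CommRing R] {a b : R⟦X⟧}
    (h : ∀ N, Ideal.Quotient.mk (Ideal.span {(X : R⟦X⟧) ^ N}) a
      = Ideal.Quotient.mk (Ideal.span {(X : R⟦X⟧) ^ N}) b) : a = b :=
  eq_of_forall_X_pow_dvd_sub fun N => Ideal.mem_span_singleton.mp (Ideal.Quotient.eq.mp (h N))

theorem X_pow_dvd_pow_of_constantCoeff_eq_zero {R : Type*} [CommRing R] {g : R⟦X⟧}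
    (hg : constantCoeff g = 0) (j : ℕ) : (X : R⟦X⟧) ^ j ∣ g ^ j :=
  pow_dvd_pow_of_dvd (X_dvd_iff.mpr hg) j

theorem mk_pow_eq_zero_of_constantCoeff_eq_zero {R : Type*} [CommRing R] {g : R⟦X⟧}
    (hg : constantCoeff g = 0) (N : ℕ) :
    Ideal.Quotient.mk (Ideal.span {(X : R⟦X⟧) ^ N}) g ^ N = 0 := by
  rw [← map_pow, Ideal.Quotient.eq_zero_iff_mem, Ideal.mem_span_singleton]
  exact X_pow_dvd_pow_of_constantCoeff_eq_zero hg N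

theorem mem_adicFil_self_iff {R : Type} [CommRing R] {r a : R} {N : ℕ} :
    a ∈ adicFil R R r N ↔ r ^ N ∣ a := by
  constructor
  · intro ha
    induction ha using Submodule.span_induction with
    | mem x hx => obtain ⟨y, rfl⟩ := hx; exact dvd_mul_right _ _
    | zero => exact dvd_zero _
    | add x y _ _ hx hy => exact dvd_add hx hy
    | smul c x _ hx => exact dvd_mul_of_dvd_right hx c
  · rintro ⟨y, rfl⟩
    exact Submodule.subset_span ⟨y, rfl⟩

section Exp

variable {k : Type} [Field k]

theorem X_pow_dvd_expOf_sub_sum {g : Rk k} (hg : constantCoeff g = 0) (N : ℕ) :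
    (X : Rk k) ^ N ∣ expOf k g - ∑ m ∈ Finset.range N, C ((m.factorial : k)⁻¹) * g ^ m := by
  refine X_pow_dvd_iff.mpr fun u hu => ?_
  simp only [expOf, map_sub, coeff_mk, map_sum, coeff_C_mul, sub_eq_zero]
  refine Finset.sum_subset (Finset.range_subset_range.mpr hu) fun j _ hj => ?_
  rw [Finset.mem_range, not_lt] at hj
  rw [X_pow_dvd_iff.mp (X_pow_dvd_pow_of_constantCoeff_eq_zero hg j) u hj, mul_zero]

variable [CharZero k]

theorem mk_expOf {g : Rk k} (hg : constantCoeff g = 0) (N : ℕ) :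
    Ideal.Quotient.mk (Ideal.span {(X : Rk k) ^ N}) (expOf k g)
      = IsNilpotent.exp (Ideal.Quotient.mk (Ideal.span {(X : Rk k) ^ N}) g) := by
  have hsmul (m : ℕ) (y : Rk k) :
      ((m.factorial : ℚ)⁻¹) • Ideal.Quotient.mk (Ideal.span {(X : Rk k) ^ N}) y
        = Ideal.Quotient.mk (Ideal.span {(X : Rk k) ^ N}) (C ((m.factorial : k)⁻¹) * y) := by
    rw [← map_rat_smul, Algebra.smul_def, PowerSeries.algebraMap_apply, map_inv₀, map_natCast]
  rw [IsNilpotent.exp_eq_sum (mk_pow_eq_zero_of_constantCoeff_eq_zero hg N), ← sub_eq_zero]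
  simp only [← map_pow, hsmul, ← map_sum, ← map_sub]
  rw [Ideal.Quotient.eq_zero_iff_mem, Ideal.mem_span_singleton]
  exact X_pow_dvd_expOf_sub_sum hg N

theorem expOf_add {g h : Rk k} (hg : constantCoeff g = 0) (hh : constantCoeff h = 0) :
    expOf k (g + h) = expOf k g * expOf k h := by
  refine eq_of_forall_mk_eq fun N => ?_
  have hgh : constantCoeff (g + h) = 0 := by rw [map_add, hg, hh, add_zero]
  rw [map_mul, mk_expOf hg, mk_expOf hh, mk_expOf hgh, map_add]
  exact IsNilpotent.exp_add_of_commute (Commute.all _ _)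
    ⟨N, mk_pow_eq_zero_of_constantCoeff_eq_zero hg N⟩
    ⟨N, mk_pow_eq_zero_of_constantCoeff_eq_zero hh N⟩

theorem expOf_neg_mul_expOf {g : Rk k} (hg : constantCoeff g = 0) :
    expOf k (-g) * expOf k g = 1 := by
  refine eq_of_forall_mk_eq fun N => ?_
  have hg' : constantCoeff (-g) = 0 := by rw [map_neg, hg, neg_zero]
  rw [map_mul, mk_expOf hg, mk_expOf hg', map_neg, map_one]
  exact IsNilpotent.exp_neg_mul_exp_self ⟨N, mk_pow_eq_zero_of_constantCoeff_eq_zero hg N⟩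

end Exp

theorem sg_zero (S : Type) [Ring S] : sg S 0 = 1 := if_pos rfl

theorem pp_self (p : ℕ → ZMod 2) (i : ℕ) : pp p i i = 0 := CharTwo.add_self_eq_zero (p i)

def evenTensors (S A : Type) [CommRing S] [Ring A] [Algebra S A] (g : ZMod 2 → Submodule S A) :
    Submodule S (A ⊗[S] A) :=
  Submodule.span S {T | ∃ u ∈ g 0, ∃ v ∈ g 0, T = u ⊗ₜ[S] v}

section Twist

variable {k : Type} [Field k] {n : ℕ} {p : ℕ → ZMod 2}
  {U : YamaneHopf k n p} {Fa : FGLAlg k n p}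
  {B : Fa.A →ₗ[Rk k] U.A →ₗ[Rk k] Rk k}
  {B2 : (Fa.A ⊗[Rk k] Fa.A) →ₗ[Rk k] (U.A ⊗[Rk k] U.A) →ₗ[Rk k] Rk k}

theorem Γg_mul_mem_even {t : ℕ} (ht : t ∈ Finset.Icc 1 n) {u : U.A} (hu : u ∈ U.g 0) :
    U.Γg t * u ∈ U.g 0 := by
  simpa using U.grading.mul_mem (U.parΓ t ht) hu

theorem m2_Γg_tmul_Γg_tmul {t l : ℕ} (hl : l ∈ Finset.Icc 1 n) {u : U.A} (hu : u ∈ U.g 0)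
    (v : U.A) : U.m2 (U.Γg t ⊗ₜ U.Γg l) (u ⊗ₜ v) = (U.Γg t * u) ⊗ₜ (U.Γg l * v) := by
  rw [U.bialg.superMul 0 0 _ _ _ _ (U.parΓ l hl) hu, mul_zero, sg_zero, one_smul]

theorem m2_Γg_tmul_Γg_mem_evenTensors {t l : ℕ} (ht : t ∈ Finset.Icc 1 n)
    (hl : l ∈ Finset.Icc 1 n) {T : U.A ⊗[Rk k] U.A} (hT : T ∈ evenTensors (Rk k) U.A U.g) :
    U.m2 (U.Γg t ⊗ₜ U.Γg l) T ∈ evenTensors (Rk k) U.A U.g := by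
  refine (Submodule.span_le.mpr ?_ : _ ≤ (evenTensors (Rk k) U.A U.g).comap _) hT
  rintro _ ⟨u, hu, v, hv, rfl⟩
  rw [SetLike.mem_coe, Submodule.mem_comap, m2_Γg_tmul_Γg_tmul hl hu]
  exact Submodule.subset_span ⟨_, Γg_mul_mem_even ht hu, _, Γg_mul_mem_even hl hv, rfl⟩

theorem m2_twistElt_mem_evenTensors (φ : ℕ → ℕ → Rk k) {T : U.A ⊗[Rk k] U.A}
    (hT : T ∈ evenTensors (Rk k) U.A U.g) :
    U.m2 (twistElt k n p U.toYamaneAlg φ) T ∈ evenTensors (Rk k) U.A U.g := by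
  simp only [twistElt, map_sum, map_smul, LinearMap.sum_apply, LinearMap.smul_apply]
  exact Submodule.sum_mem _ fun t ht => Submodule.sum_mem _ fun l hl =>
    Submodule.smul_mem _ _ (m2_Γg_tmul_Γg_mem_evenTensors ht hl hT)

theorem spow_twistElt_mem_evenTensors (φ : ℕ → ℕ → Rk k) (m : ℕ) :
    spow (Rk k) (U.A ⊗[Rk k] U.A) U.m2 (1 ⊗ₜ 1) (twistElt k n p U.toYamaneAlg φ) m
      ∈ evenTensors (Rk k) U.A U.g := by
  induction m with
  | zero => exact Submodule.subset_span ⟨1, U.grading.one_mem, 1, U.grading.one_mem, rfl⟩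
  | succ m ih => exact m2_twistElt_mem_evenTensors φ ih

variable (hpair : IsBialgPairing (Rk k) Fa.A U.A Fa.g U.g Fa.cop Fa.cou U.cop U.cou B B2)
include hpair

theorem pairing_x_one {i j : ℕ} (hi : i ∈ Finset.Icc 1 n) (hj : j ∈ Finset.Icc 1 n) :
    B (Fa.x i j) 1 = if i = j then 1 else 0 := by
  rw [hpair.oneU, Fa.coux i hi j hj]

theorem pairing2_tmul_of_even {f f' : Fa.A} {pf : ZMod 2} (hf' : f' ∈ Fa.g pf) {u : U.A}
    (hu : u ∈ U.g 0) (v : U.A) : B2 (f ⊗ₜ f') (u ⊗ₜ v) = B f u * B f' v := by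
  rw [hpair.pair2 pf 0 f f' u v hf' hu, mul_zero, sg_zero, one_mul]

variable (hvals : PairGenVals k n p U.toYamaneAlg Fa.A Fa.x B)
include hvals

theorem pairing_x_Γg_mul {i r t : ℕ} (hi : i ∈ Finset.Icc 1 n) (hr : r ∈ Finset.Icc 1 n)
    (ht : t ∈ Finset.Icc 1 n) (u : U.A) :
    B (Fa.x i r) (U.Γg t * u) = (if i = t then 1 else 0) * B (Fa.x i r) u := by
  rw [hpair.mulU, Fa.copx i hi r hr, map_sum, LinearMap.sum_apply]
  rw [Finset.sum_congr rfl fun a ha => by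
    rw [map_smul, LinearMap.smul_apply, smul_eq_mul,
      pairing2_tmul_of_even hpair (Fa.parx a ha r hr) (U.parΓ t ht), (hvals i hi a ha).2 t ht]]
  by_cases hit : i = t
  · subst hit
    simp [hi, pp_self, sg_zero]
  · simp [hit]

variable {i r l h : ℕ} (hi : i ∈ Finset.Icc 1 n) (hr : r ∈ Finset.Icc 1 n)
  (hl : l ∈ Finset.Icc 1 n) (hh : h ∈ Finset.Icc 1 n)
include hi hr hl hh

theorem pairing2_x_tmul_x_m2_Γg_tmul_Γg {t m : ℕ} (ht : t ∈ Finset.Icc 1 n)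
    (hm : m ∈ Finset.Icc 1 n) {T : U.A ⊗[Rk k] U.A} (hT : T ∈ evenTensors (Rk k) U.A U.g) :
    B2 (Fa.x i r ⊗ₜ Fa.x l h) (U.m2 (U.Γg t ⊗ₜ U.Γg m) T)
      = (if i = t then 1 else 0) * (if l = m then 1 else 0) * B2 (Fa.x i r ⊗ₜ Fa.x l h) T := by
  suffices Set.EqOn ((B2 (Fa.x i r ⊗ₜ Fa.x l h)).comp (U.m2 (U.Γg t ⊗ₜ U.Γg m)))
      ⇑(((if i = t then 1 else 0) * (if l = m then 1 else 0) : Rk k) • B2 (Fa.x i r ⊗ₜ Fa.x l h))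
      {T | ∃ u ∈ U.g 0, ∃ v ∈ U.g 0, T = u ⊗ₜ v} by
    simpa only [LinearMap.comp_apply, LinearMap.smul_apply, smul_eq_mul]
      using LinearMap.eqOn_span' this hT
  rintro _ ⟨u, hu, v, -, rfl⟩
  simp only [LinearMap.comp_apply, LinearMap.smul_apply, smul_eq_mul, m2_Γg_tmul_Γg_tmul hm hu,
    pairing2_tmul_of_even hpair (Fa.parx l hl h hh) (Γg_mul_mem_even ht hu),
    pairing2_tmul_of_even hpair (Fa.parx l hl h hh) hu,
    pairing_x_Γg_mul hpair hvals hi hr ht, pairing_x_Γg_mul hpair hvals hl hh hm]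
  ring

theorem pairing2_x_tmul_x_m2_twistElt (φ : ℕ → ℕ → Rk k) {T : U.A ⊗[Rk k] U.A}
    (hT : T ∈ evenTensors (Rk k) U.A U.g) :
    B2 (Fa.x i r ⊗ₜ Fa.x l h) (U.m2 (twistElt k n p U.toYamaneAlg φ) T)
      = C (2⁻¹ : k) * (X * φ i l) * B2 (Fa.x i r ⊗ₜ Fa.x l h) T := by
  simp only [twistElt, map_sum, map_smul, LinearMap.sum_apply, LinearMap.smul_apply, smul_eq_mul]
  rw [Finset.sum_congr rfl fun t ht => Finset.sum_congr rfl fun m hm => by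
    rw [pairing2_x_tmul_x_m2_Γg_tmul_Γg hpair hvals hi hr hl hh ht hm hT]]
  simp [ite_mul, mul_ite, hi, hl]

theorem pairing2_x_tmul_x_spow_twistElt (φ : ℕ → ℕ → Rk k) (m : ℕ) :
    B2 (Fa.x i r ⊗ₜ Fa.x l h)
        (spow (Rk k) (U.A ⊗[Rk k] U.A) U.m2 (1 ⊗ₜ 1) (twistElt k n p U.toYamaneAlg φ) m)
      = (if i = r then 1 else 0) * (if l = h then 1 else 0)
          * (C (2⁻¹ : k) * (X * φ i l)) ^ m := by
  induction m with
  | zero =>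
    rw [spow, pairing2_tmul_of_even hpair (Fa.parx l hl h hh) U.grading.one_mem,
      pairing_x_one hpair hi hr, pairing_x_one hpair hl hh, pow_zero, mul_one]
  | succ m ih =>
    rw [spow, pairing2_x_tmul_x_m2_twistElt hpair hvals hi hr hl hh φ
      (spow_twistElt_mem_evenTensors φ m), ih]
    ring

theorem pairing2_x_tmul_x_twistPartial (φ : ℕ → ℕ → Rk k) (N : ℕ) :
    B2 (Fa.x i r ⊗ₜ Fa.x l h) (twistPartial k n p U.toYamaneAlg U.m2 φ N)
      = (if i = r then 1 else 0) * (if l = h then 1 else 0)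
          * ∑ m ∈ Finset.range N, C ((m.factorial : k)⁻¹) * (C (2⁻¹ : k) * (X * φ i l)) ^ m := by
  simp only [twistPartial, map_sum, map_smul, smul_eq_mul, Finset.mul_sum,
    pairing2_x_tmul_x_spow_twistElt hpair hvals hi hr hl hh]
  exact Finset.sum_congr rfl fun m _ => by ring

theorem IsTwistEval.apply_x {φ : ℕ → ℕ → Rk k} {σ : Fa.A →ₗ[Rk k] Fa.A →ₗ[Rk k] Rk k}
    (hσ : IsTwistEval k n p U.toYamaneAlg U.m2 Fa.A B2 φ σ) :
    σ (Fa.x i r) (Fa.x l h)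
      = (if i = r then 1 else 0) * (if l = h then 1 else 0)
          * expOf k (C (2⁻¹ : k) * (X * φ i l)) := by
  refine eq_of_forall_X_pow_dvd_sub fun N => ?_
  have htwist := mem_adicFil_self_iff.mp (hσ (Fa.x i r) (Fa.x l h) N)
  rw [pairing2_x_tmul_x_twistPartial hpair hvals hi hr hl hh] at htwist
  have hexp := X_pow_dvd_expOf_sub_sum (g := C (2⁻¹ : k) * (X * φ i l)) (by simp) N
  convert dvd_sub htwist
    (dvd_mul_of_dvd_right hexp ((if i = r then 1 else 0) * (if l = h then 1 else 0))) using 1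
  ring

end Twist

section Deformation

variable {k : Type} [Field k] {n : ℕ} {p : ℕ → ZMod 2} {Fa : FGLAlg k n p}

theorem rep_cop_x {i j : ℕ} (hi : i ∈ Finset.Icc 1 n) (hj : j ∈ Finset.Icc 1 n) :
    Rep (Rk k) Fa.A Fa.g (Fa.cop (Fa.x i j)) ℕ (Finset.Icc 1 n)
      (fun a => sg (Rk k) (pp p i a * pp p a j) • Fa.x i a) (fun a => Fa.x a j)
      (fun a => pp p i a) (fun a => pp p a j) :=
  ⟨by rw [Fa.copx i hi j hj]; exact Finset.sum_congr rfl fun a _ => TensorProduct.smul_tmul' _ _ _,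
    fun a ha => ⟨Submodule.smul_mem _ _ (Fa.parx i hi a ha), Fa.parx a ha j hj⟩⟩

theorem rep3_cop_x {i j : ℕ} (hi : i ∈ Finset.Icc 1 n) (hj : j ∈ Finset.Icc 1 n) :
    Rep3 (Rk k) Fa.A Fa.g Fa.cop (Fa.x i j) (ℕ × ℕ) (Finset.Icc 1 n ×ˢ Finset.Icc 1 n)
      (fun w => (sg (Rk k) (pp p i w.1 * pp p w.1 j) * sg (Rk k) (pp p i w.2 * pp p w.2 w.1))
        • Fa.x i w.2)
      (fun w => Fa.x w.2 w.1) (fun w => Fa.x w.1 j)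
      (fun w => pp p i w.2) (fun w => pp p w.2 w.1) (fun w => pp p w.1 j) := by
  refine ⟨?_, ?_⟩
  · rw [Fa.copx i hi j hj, map_sum, Finset.sum_product]
    refine Finset.sum_congr rfl fun a ha => ?_
    rw [map_smul, TensorProduct.map_tmul, LinearMap.id_coe, id_eq, Fa.copx i hi a ha,
      TensorProduct.sum_tmul, Finset.smul_sum]
    refine Finset.sum_congr rfl fun b _ => ?_
    simp only [mul_smul, ← TensorProduct.smul_tmul']
  · rintro ⟨a, b⟩ hw
    rw [Finset.mem_product] at hw
    exact ⟨Submodule.smul_mem _ _ (Fa.parx i hi b hw.2), Fa.parx b hw.2 a hw.1,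
      Fa.parx a hw.1 j hj⟩

variable {σ σinv : Fa.A →ₗ[Rk k] Fa.A →ₗ[Rk k] Rk k} {c c' : ℕ → ℕ → Rk k}

theorem ConvInverse.apply_x (hconv : ConvInverse (Rk k) Fa.A Fa.g Fa.cop Fa.cou σ σinv)
    (hσ : ∀ i ∈ Finset.Icc 1 n, ∀ r ∈ Finset.Icc 1 n, ∀ l ∈ Finset.Icc 1 n,
      ∀ h ∈ Finset.Icc 1 n,
      σ (Fa.x i r) (Fa.x l h) = (if i = r then 1 else 0) * (if l = h then 1 else 0) * c i l)
    (hc : ∀ i l, c' i l * c i l = 1)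
    {i j l h : ℕ} (hi : i ∈ Finset.Icc 1 n) (hj : j ∈ Finset.Icc 1 n)
    (hl : l ∈ Finset.Icc 1 n) (hh : h ∈ Finset.Icc 1 n) :
    σinv (Fa.x i j) (Fa.x l h) = (if i = j then 1 else 0) * (if l = h then 1 else 0) * c' i l := by
  have hsum := (hconv _ _ _ _ _ _ _ _ (rep_cop_x hi hj) _ _ _ _ _ _ (rep_cop_x hl hh)).1
  rw [Fa.coux i hi j hj, Fa.coux l hl h hh] at hsum
  simp only [map_smul, LinearMap.smul_apply, smul_eq_mul] at hsum
  rw [Finset.sum_congr rfl fun a ha => Finset.sum_congr rfl fun b hb => by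
    rw [hσ i hi a ha l hl b hb]] at hsum
  simp [ite_mul, mul_ite, hi, hl, pp_self, sg_zero] at hsum
  calc σinv (Fa.x i j) (Fa.x l h) = c' i l * (c i l * σinv (Fa.x i j) (Fa.x l h)) := by
        rw [← mul_assoc, hc, one_mul]
    _ = _ := by rw [hsum]; split_ifs <;> ring

theorem IsCocycleDeform.apply_x {mulσ : Fa.A → Fa.A → Fa.A}
    (hdef : IsCocycleDeform (Rk k) Fa.A Fa.g (fun a b => a * b) Fa.cop σ σinv mulσ)
    (hσ : ∀ i ∈ Finset.Icc 1 n, ∀ r ∈ Finset.Icc 1 n, ∀ l ∈ Finset.Icc 1 n,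
      ∀ h ∈ Finset.Icc 1 n,
      σ (Fa.x i r) (Fa.x l h) = (if i = r then 1 else 0) * (if l = h then 1 else 0) * c i l)
    (hσinv : ∀ i ∈ Finset.Icc 1 n, ∀ r ∈ Finset.Icc 1 n, ∀ l ∈ Finset.Icc 1 n,
      ∀ h ∈ Finset.Icc 1 n,
      σinv (Fa.x i r) (Fa.x l h) = (if i = r then 1 else 0) * (if l = h then 1 else 0) * c' i l)
    {r s l t : ℕ} (hr : r ∈ Finset.Icc 1 n) (hs : s ∈ Finset.Icc 1 n)
    (hl : l ∈ Finset.Icc 1 n) (ht : t ∈ Finset.Icc 1 n) :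
    mulσ (Fa.x r s) (Fa.x l t) = (c r l * c' s t) • (Fa.x r s * Fa.x l t) := by
  rw [hdef _ _ _ _ _ _ _ _ _ _ (rep3_cop_x hr hs) _ _ _ _ _ _ _ _ (rep3_cop_x hl ht)]
  simp only [Finset.sum_product, map_smul, LinearMap.smul_apply, smul_eq_mul]
  rw [Finset.sum_congr rfl fun a ha => Finset.sum_congr rfl fun b hb =>
    Finset.sum_congr rfl fun a' ha' => Finset.sum_congr rfl fun b' hb' => by
      rw [hσ r hr b hb l hl b' hb', hσinv a ha s hs a' ha' t ht]]
  simp [ite_mul, mul_ite, ite_smul, hr, hs, hl, ht, pp_self, sg_zero]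

end Deformation

theorem statement8_general (k : Type) [Field k] [CharZero k] (n : ℕ)
    (p : ℕ → ZMod 2) (φ : ℕ → ℕ → Rk k)
    (U : YamaneHopf k n p) (Fa : FGLAlg k n p)
    (B : Fa.A →ₗ[Rk k] U.A →ₗ[Rk k] Rk k)
    (B2 : (Fa.A ⊗[Rk k] Fa.A) →ₗ[Rk k] (U.A ⊗[Rk k] U.A) →ₗ[Rk k] Rk k)
    (hpair : IsBialgPairing (Rk k) Fa.A U.A Fa.g U.g Fa.cop Fa.cou U.cop U.cou B B2)
    (hvals : PairGenVals k n p U.toYamaneAlg Fa.A Fa.x B)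
    (σ : Fa.A →ₗ[Rk k] Fa.A →ₗ[Rk k] Rk k)
    (hσ : IsTwistEval k n p U.toYamaneAlg U.m2 Fa.A B2 φ σ) :
    (∀ i ∈ Finset.Icc 1 n, ∀ r ∈ Finset.Icc 1 n, ∀ l ∈ Finset.Icc 1 n,
     ∀ h ∈ Finset.Icc 1 n,
      σ (Fa.x i r) (Fa.x l h)
        = (if i = r then 1 else 0) * (if l = h then 1 else 0)
            * expOf k (PowerSeries.C ((2 : k)⁻¹) * (PowerSeries.X * φ i l))) ∧
    (∀ (σinv : Fa.A →ₗ[Rk k] Fa.A →ₗ[Rk k] Rk k),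
      ConvInverse (Rk k) Fa.A Fa.g Fa.cop Fa.cou σ σinv →
      ∀ mulσ : Fa.A → Fa.A → Fa.A,
        IsCocycleDeform (Rk k) Fa.A Fa.g (fun a b => a * b) Fa.cop σ σinv mulσ →
        ∀ r ∈ Finset.Icc 1 n, ∀ s ∈ Finset.Icc 1 n, ∀ l ∈ Finset.Icc 1 n,
        ∀ t ∈ Finset.Icc 1 n,
          mulσ (Fa.x r s) (Fa.x l t)
            = expOf k (PowerSeries.C ((2 : k)⁻¹)
                * (PowerSeries.X * (φ r l - φ s t))) • (Fa.x r s * Fa.x l t)) := by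
  have hc : ∀ i l, constantCoeff (C (2⁻¹ : k) * (X * φ i l)) = 0 := fun i l => by simp
  have hσx : ∀ i ∈ Finset.Icc 1 n, ∀ r ∈ Finset.Icc 1 n, ∀ l ∈ Finset.Icc 1 n,
      ∀ h ∈ Finset.Icc 1 n, σ (Fa.x i r) (Fa.x l h)
        = (if i = r then 1 else 0) * (if l = h then 1 else 0)
            * expOf k (C (2⁻¹ : k) * (X * φ i l)) :=
    fun i hi r hr l hl h hh => hσ.apply_x hpair hvals hi hr hl hh
  refine ⟨hσx, fun σinv hconv mulσ hdef r hr s hs l hl t ht => ?_⟩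
  have hσinv : ∀ i ∈ Finset.Icc 1 n, ∀ j ∈ Finset.Icc 1 n, ∀ l ∈ Finset.Icc 1 n,
      ∀ h ∈ Finset.Icc 1 n, σinv (Fa.x i j) (Fa.x l h)
        = (if i = j then 1 else 0) * (if l = h then 1 else 0)
            * expOf k (-(C (2⁻¹ : k) * (X * φ i l))) :=
    fun i hi j hj l hl h hh =>
      hconv.apply_x hσx (fun i l => expOf_neg_mul_expOf (hc i l)) hi hj hl hh
  rw [hdef.apply_x hσx hσinv hr hs hl ht, ← expOf_add (hc r l) (by simp [hc])]
  congr 2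
  ring

/-- formulas (3.19)–(3.20).  Let `σ_Φ` be the 2-cocycle on
`F_ℏ[[GL_n^p]]` obtained by evaluation against the twist
`F_Φ = exp(ℏ·2⁻¹ ∑ φ_{t,ℓ} Γ_t ⊗ Γ_ℓ)` of `U_ℏ(gl_n^p)` through the Hopf
pairing.  Then `σ_Φ(x_{i,r}, x_{ℓ,h}) = δ_{i,r} δ_{ℓ,h} e^{ℏ·2⁻¹ φ_{i,ℓ}}`, and
consequently the `σ_Φ`-deformed product satisfies
`x_{r,s} ·_{σ_Φ} x_{ℓ,t} = e^{ℏ·2⁻¹(φ_{r,ℓ} − φ_{s,t})} · x_{r,s} x_{ℓ,t}`. -/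
theorem statement8 (k : Type) [Field k] [CharZero k] (n : ℕ) (hn : 2 ≤ n)
    (p : ℕ → ZMod 2) (φ : ℕ → ℕ → Rk k) (hφ : ∀ t l : ℕ, φ t l = -φ l t)
    (U : YamaneHopf k n p) (Fa : FGLAlg k n p)
    (B : Fa.A →ₗ[Rk k] U.A →ₗ[Rk k] Rk k)
    (B2 : (Fa.A ⊗[Rk k] Fa.A) →ₗ[Rk k] (U.A ⊗[Rk k] U.A) →ₗ[Rk k] Rk k)
    (hpair : IsBialgPairing (Rk k) Fa.A U.A Fa.g U.g Fa.cop Fa.cou U.cop U.cou B B2)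
    (hvals : PairGenVals k n p U.toYamaneAlg Fa.A Fa.x B)
    (σ : Fa.A →ₗ[Rk k] Fa.A →ₗ[Rk k] Rk k)
    (hσ : IsTwistEval k n p U.toYamaneAlg U.m2 Fa.A B2 φ σ) :
    (∀ i ∈ Finset.Icc 1 n, ∀ r ∈ Finset.Icc 1 n, ∀ l ∈ Finset.Icc 1 n,
     ∀ h ∈ Finset.Icc 1 n,
      σ (Fa.x i r) (Fa.x l h)
        = (if i = r then 1 else 0) * (if l = h then 1 else 0)
            * expOf k (PowerSeries.C ((2 : k)⁻¹) * (PowerSeries.X * φ i l))) ∧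
    (∀ (σinv : Fa.A →ₗ[Rk k] Fa.A →ₗ[Rk k] Rk k),
      ConvInverse (Rk k) Fa.A Fa.g Fa.cop Fa.cou σ σinv →
      ∀ mulσ : Fa.A → Fa.A → Fa.A,
        IsCocycleDeform (Rk k) Fa.A Fa.g (fun a b => a * b) Fa.cop σ σinv mulσ →
        ∀ r ∈ Finset.Icc 1 n, ∀ s ∈ Finset.Icc 1 n, ∀ l ∈ Finset.Icc 1 n,
        ∀ t ∈ Finset.Icc 1 n,
          mulσ (Fa.x r s) (Fa.x l t)
            = expOf k (PowerSeries.C ((2 : k)⁻¹)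
                * (PowerSeries.X * (φ r l - φ s t))) • (Fa.x r s * Fa.x l t)) :=
  statement8_general k n p φ U Fa B B2 hpair hvals σ hσ

end QGLS
end
end

section
/- Let Θ_i := (L_i^{+(−1)^{p(i)}} L_{i+1}^{−(−1)^{p(i+1)}} − L_i^{−(−1)^{p(i)}} L_{i+1}^{+(−1)^{p(i+1)}})/(q_i^{+1} − q_i^{−1}) ∈ U_q(gl_n^p) for i ∈ I_{n−1}, and let U_q^int(gl_n^p) be the unital k[q,q^{−1}]-subsuperalgebra of U_q(gl_n^p) generated by {E_i, L_k^{±1}, Θ_i, F_i | i ∈ I_{n−1}, k ∈ I_n}. Then U_q^int(gl_n^p) is a Hopf subsuperalgebra over k[q,q^{−1}] of the Hopf k(q)-superalgebra U_q(gl_n^p): it is closed under the coproduct, counit and antipode of U_q(gl_n^p). -/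
/-!
Formalization framework for (multiparameter) quantum general linear supergroups,
following Gavarini–Paolini, "Multiparameter Quantum General Linear Supergroup".

We work over `k[[ℏ]] := PowerSeries k` for a field `k` of characteristic zero.
"Super" (ℤ₂-graded) structures are encoded by a family of submodules
`g : ZMod 2 → Submodule S A` (the homogeneous components), and the Koszul-sign
multiplication on `A ⊗ A` is encoded by a bilinear map `m2` together with its
characterizing property on homogeneous pure tensors (`IsSuperMul`).
"Topological" notions (ℏ-adic or I-adic completeness, topological generation,
topological bases) are rendered through the corresponding adic filtrations.
-/

open scoped TensorProduct
open Finset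

noncomputable section

namespace QGLS

/-! ## Polynomial versions: rational and integral QUESAs and QFSAs -/

section GenericMat

variable (S : Type) [CommRing S] (n : ℕ) (p : ℕ → ZMod 2)

section MatRels
variable (A : Type) [Ring A] [Algebra S A]

/-- The relations of a (multiparametric) quantum matrix function superalgebra,
with coefficient data: `qi s` is `q_s`, `qiInv s` is `q_s⁻¹`, `qph r s` is
`q_{r,s}` and `qphI r s` is `q_{r,s}⁻¹` (all equal to `1` in the uniparametric
case). -/
structure FMatRels (qi qiInv : ℕ → S) (qph qphI : ℕ → ℕ → S) (x : ℕ → ℕ → A) :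
    Prop where
  sq : ∀ i ∈ Finset.Icc 1 n, ∀ j ∈ Finset.Icc 1 n, pp p i j = 1 → x i j ^ 2 = 0
  row : ∀ i ∈ Finset.Icc 1 n, ∀ j ∈ Finset.Icc 1 n, ∀ k' ∈ Finset.Icc 1 n, j < k' →
    x i j * x i k'
      = (sg S (pp p i j * pp p i k') * qi i * qphI j k') • (x i k' * x i j)
  col : ∀ i ∈ Finset.Icc 1 n, ∀ h ∈ Finset.Icc 1 n, ∀ j ∈ Finset.Icc 1 n, i < h →
    x i j * x h j
      = (sg S (pp p i j * pp p h j) * qi j * qph i h) • (x h j * x i j)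
  anti : ∀ i ∈ Finset.Icc 1 n, ∀ h ∈ Finset.Icc 1 n, ∀ j ∈ Finset.Icc 1 n,
    ∀ k' ∈ Finset.Icc 1 n, i < h → k' < j →
    x i j * x h k'
      = (sg S (pp p i j * pp p h k') * qph i h * qphI j k') • (x h k' * x i j)
  syn : ∀ i ∈ Finset.Icc 1 n, ∀ h ∈ Finset.Icc 1 n, ∀ j ∈ Finset.Icc 1 n,
    ∀ k' ∈ Finset.Icc 1 n, i < h → j < k' →
    x i j * x h k'
      = (sg S (pp p i j * pp p h k') * qph i h * qphI j k') • (x h k' * x i j)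
        + (sg S (pp p i j * pp p i k') * (qi i - qiInv i) * qphI j k') • (x i k' * x h j)

end MatRels

/-- A (multiparametric) quantum matrix function superbialgebra over `S`, with
coefficient data `qi, qiInv, qph, qphI`:  generated by the `x_{ij}` subject to
the relations `FMatRels`, with the matrix coproduct and counit, and universal
among such `S`-superalgebras. -/
structure FMatAlg (qi qiInv : ℕ → S) (qph qphI : ℕ → ℕ → S) where
  A : Type
  [ringA : Ring A]
  [algA : Algebra S A]
  g : ZMod 2 → Submodule S A
  x : ℕ → ℕ → A
  parx : ∀ i ∈ Finset.Icc 1 n, ∀ j ∈ Finset.Icc 1 n, x i j ∈ g (pp p i j)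
  rels : FMatRels S n p A qi qiInv qph qphI x
  m2 : (A ⊗[S] A) →ₗ[S] (A ⊗[S] A) →ₗ[S] (A ⊗[S] A)
  cop : A →ₗ[S] A ⊗[S] A
  cou : A →ₗ[S] S
  bialg : IsSuperBialg S A g m2 cop cou
  copx : ∀ i ∈ Finset.Icc 1 n, ∀ j ∈ Finset.Icc 1 n,
    cop (x i j) = ∑ a ∈ Finset.Icc 1 n, sg S (pp p i a * pp p a j) • (x i a ⊗ₜ[S] x a j)
  coux : ∀ i ∈ Finset.Icc 1 n, ∀ j ∈ Finset.Icc 1 n, cou (x i j) = if i = j then 1 else 0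
  gen : Algebra.adjoin S
    {a : A | ∃ i ∈ Finset.Icc 1 n, ∃ j ∈ Finset.Icc 1 n, a = x i j} = ⊤
  univ : ∀ (B : Type) [Ring B] [Algebra S B] (y : ℕ → ℕ → B),
    FMatRels S n p B qi qiInv qph qphI y →
    ∃ ψ : A →ₐ[S] B, ∀ i ∈ Finset.Icc 1 n, ∀ j ∈ Finset.Icc 1 n, ψ (x i j) = y i j

attribute [instance] FMatAlg.ringA FMatAlg.algA

end GenericMat

section Poly

variable (k : Type) [Field k] [CharZero k]

/-- The base field `k(q)` of rational functions. -/
abbrev Kq := RatFunc k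

/-- The base ring `k[q, q⁻¹]` of Laurent polynomials. -/
abbrev Lk := LaurentPolynomial k

/-- The embedding `k[q,q⁻¹] → k(q)`, `q ↦ X`. -/
def laurentToRat : LaurentPolynomial k →ₐ[k] RatFunc k :=
  (AddMonoidAlgebra.lift k (RatFunc k) ℤ)
    ((Units.coeHom (RatFunc k)).comp
      ((zpowersHom (RatFunc k)ˣ) (Units.mk0 RatFunc.X RatFunc.X_ne_zero)))

/-- `q_s := q^{(−1)^{p(s)}}` in `k(q)`. -/
def qpol (p : ℕ → ZMod 2) (s : ℕ) : Kq k := if p s = 0 then RatFunc.X else (RatFunc.X)⁻¹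

/-- `q_s⁻¹` in `k(q)`. -/
def qpolInv (p : ℕ → ZMod 2) (s : ℕ) : Kq k := if p s = 0 then (RatFunc.X)⁻¹ else RatFunc.X

/-- `q_s := q^{(−1)^{p(s)}}` in `k[q,q⁻¹]`. -/
def qLau (p : ℕ → ZMod 2) (s : ℕ) : Lk k :=
  if p s = 0 then LaurentPolynomial.T 1 else LaurentPolynomial.T (-1)

/-- `q_s⁻¹` in `k[q,q⁻¹]`. -/
def qLauInv (p : ℕ → ZMod 2) (s : ℕ) : Lk k :=
  if p s = 0 then LaurentPolynomial.T (-1) else LaurentPolynomial.T 1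

variable (n : ℕ) (p : ℕ → ZMod 2)

section UqDefs
variable (A : Type) [Ring A] [Algebra (Kq k) A]

/-- `K_i^{+1} := L_i^{(−1)^{p(i)}} L_{i+1}^{(−1)^{p(i+1)}}`. -/
def Kp (L Linv : ℕ → A) (i : ℕ) : A :=
  (if p i = 0 then L i else Linv i) * (if p (i + 1) = 0 then L (i + 1) else Linv (i + 1))

/-- `K_i^{−1}`. -/
def Km (L Linv : ℕ → A) (i : ℕ) : A :=
  (if p i = 0 then Linv i else L i) * (if p (i + 1) = 0 then Linv (i + 1) else L (i + 1))

/-- The defining relations (4.1)–(4.7) of the rational QUESA `U_q(gl_n^p)`. -/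
structure UqRels (E L Linv F : ℕ → A) : Prop where
  relLL : ∀ k' ∈ Finset.Icc 1 n, ∀ l ∈ Finset.Icc 1 n, L k' * L l = L l * L k'
  relLinv : ∀ k' ∈ Finset.Icc 1 n, L k' * Linv k' = 1 ∧ Linv k' * L k' = 1
  relLE : ∀ k' ∈ Finset.Icc 1 n, ∀ j ∈ Finset.Icc 1 (n - 1),
    L k' * E j * Linv k'
      = ((RatFunc.X : Kq k)
          ^ (((if k' = j then 1 else 0) - (if k' = j + 1 then 1 else 0)) : ℤ)) • E j
  relLF : ∀ k' ∈ Finset.Icc 1 n, ∀ j ∈ Finset.Icc 1 (n - 1),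
    L k' * F j * Linv k'
      = ((RatFunc.X : Kq k)
          ^ (((if k' = j + 1 then 1 else 0) - (if k' = j then 1 else 0)) : ℤ)) • F j
  relEF : ∀ i ∈ Finset.Icc 1 (n - 1), ∀ j ∈ Finset.Icc 1 (n - 1),
    E i * F j - sg (Kq k) (pp p i (i + 1) * pp p j (j + 1)) • (F j * E i)
      = (if i = j then (qpol k p i - qpolInv k p i)⁻¹ else 0)
          • (Kp p A L Linv i - Km p A L Linv i)
  relSq : ∀ i ∈ Finset.Icc 1 (n - 1), pp p i (i + 1) = 1 → E i ^ 2 = 0 ∧ F i ^ 2 = 0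
  relEE : ∀ i ∈ Finset.Icc 1 (n - 1), ∀ j ∈ Finset.Icc 1 (n - 1), (i + 1 < j ∨ j + 1 < i) →
    E i * E j = sg (Kq k) (pp p i (i + 1) * pp p j (j + 1)) • (E j * E i)
  relFF : ∀ i ∈ Finset.Icc 1 (n - 1), ∀ j ∈ Finset.Icc 1 (n - 1), (i + 1 < j ∨ j + 1 < i) →
    F i * F j = sg (Kq k) (pp p i (i + 1) * pp p j (j + 1)) • (F j * F i)
  relSerreE : ∀ i ∈ Finset.Icc 1 (n - 1), ∀ j ∈ Finset.Icc 1 (n - 1),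
    pp p i (i + 1) = 0 → (j = i + 1 ∨ i = j + 1) →
    E i ^ 2 * E j - ((RatFunc.X : Kq k) + (RatFunc.X)⁻¹) • (E i * E j * E i)
      + E j * E i ^ 2 = 0
  relSerreF : ∀ i ∈ Finset.Icc 1 (n - 1), ∀ j ∈ Finset.Icc 1 (n - 1),
    pp p i (i + 1) = 0 → (j = i + 1 ∨ i = j + 1) →
    F i ^ 2 * F j - ((RatFunc.X : Kq k) + (RatFunc.X)⁻¹) • (F i * F j * F i)
      + F j * F i ^ 2 = 0
  relHighE : ∀ i : ℕ, 1 ≤ i → i + 2 ≤ n - 1 → pp p (i + 1) (i + 2) = 1 →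
    let a := E i
    let b := E (i + 1)
    let c := E (i + 2)
    let pa := pp p i (i + 1)
    let pb := pp p (i + 1) (i + 2)
    let pc := pp p (i + 2) (i + 3)
    let X1 := a * b - (qpol k p (i + 1) * sg (Kq k) (pa * pb)) • (b * a)
    let X2 := X1 * c - (qpol k p (i + 2) * sg (Kq k) ((pa + pb) * pc)) • (c * X1)
    X2 * b - sg (Kq k) ((pa + pb + pc) * pb) • (b * X2) = 0
  relHighF : ∀ i : ℕ, 1 ≤ i → i + 2 ≤ n - 1 → pp p (i + 1) (i + 2) = 1 →
    let a := F i
    let b := F (i + 1)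
    let c := F (i + 2)
    let pa := pp p i (i + 1)
    let pb := pp p (i + 1) (i + 2)
    let pc := pp p (i + 2) (i + 3)
    let X1 := a * b - (qpol k p (i + 1) * sg (Kq k) (pa * pb)) • (b * a)
    let X2 := X1 * c - (qpol k p (i + 2) * sg (Kq k) ((pa + pb) * pc)) • (c * X1)
    X2 * b - sg (Kq k) ((pa + pb + pc) * pb) • (b * X2) = 0

end UqDefs

/-- The rational QUESA `U_q(gl_n^p)`: the `k(q)`-superalgebra presented by the
generators `E_i, L_k^{±1}, F_i` and relations (4.1)–(4.7). -/
structure UqAlg where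
  A : Type
  [ringA : Ring A]
  [algA : Algebra (Kq k) A]
  [algk : Algebra k A]
  [tower : IsScalarTower k (Kq k) A]
  g : ZMod 2 → Submodule (Kq k) A
  grading : SuperGrading (Kq k) A g
  E : ℕ → A
  L : ℕ → A
  Linv : ℕ → A
  F : ℕ → A
  parE : ∀ i ∈ Finset.Icc 1 (n - 1), E i ∈ g (pp p i (i + 1))
  parL : ∀ s ∈ Finset.Icc 1 n, L s ∈ g 0 ∧ Linv s ∈ g 0
  parF : ∀ i ∈ Finset.Icc 1 (n - 1), F i ∈ g (pp p i (i + 1))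
  rels : UqRels k n p A E L Linv F
  gen : Algebra.adjoin (Kq k)
    ({a : A | ∃ i ∈ Finset.Icc 1 (n - 1), a = E i}
      ∪ {a : A | ∃ s ∈ Finset.Icc 1 n, a = L s}
      ∪ {a : A | ∃ s ∈ Finset.Icc 1 n, a = Linv s}
      ∪ {a : A | ∃ i ∈ Finset.Icc 1 (n - 1), a = F i}) = ⊤
  univ : ∀ (B : Type) [Ring B] [Algebra (Kq k) B] (E' L' Linv' F' : ℕ → B),
    UqRels k n p B E' L' Linv' F' →
    ∃ ψ : A →ₐ[Kq k] B,
      (∀ i ∈ Finset.Icc 1 (n - 1), ψ (E i) = E' i) ∧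
      (∀ s ∈ Finset.Icc 1 n, ψ (L s) = L' s ∧ ψ (Linv s) = Linv' s) ∧
      (∀ i ∈ Finset.Icc 1 (n - 1), ψ (F i) = F' i)

attribute [instance] UqAlg.ringA UqAlg.algA UqAlg.algk UqAlg.tower

/-- The formulas of Theorem 4.2 for the Hopf structure of `U_q(gl_n^p)` on the
generators. -/
def UqHopfFormulas (U : UqAlg k n p)
    (cop : U.A →ₗ[Kq k] U.A ⊗[Kq k] U.A) (cou : U.A →ₗ[Kq k] Kq k)
    (St : U.A →ₗ[Kq k] U.A) : Prop :=
  (∀ i ∈ Finset.Icc 1 (n - 1),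
      cop (U.E i)
        = U.E i ⊗ₜ[Kq k] (1 : U.A) + Kp p U.A U.L U.Linv i ⊗ₜ[Kq k] U.E i
    ∧ St (U.E i) = -(Km p U.A U.L U.Linv i * U.E i)
    ∧ cou (U.E i) = 0) ∧
  (∀ s ∈ Finset.Icc 1 n,
      cop (U.L s) = U.L s ⊗ₜ[Kq k] U.L s
    ∧ cop (U.Linv s) = U.Linv s ⊗ₜ[Kq k] U.Linv s
    ∧ St (U.L s) = U.Linv s ∧ St (U.Linv s) = U.L s
    ∧ cou (U.L s) = 1 ∧ cou (U.Linv s) = 1) ∧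
  (∀ i ∈ Finset.Icc 1 (n - 1),
      cop (U.F i)
        = U.F i ⊗ₜ[Kq k] Km p U.A U.L U.Linv i + (1 : U.A) ⊗ₜ[Kq k] U.F i
    ∧ St (U.F i) = -(U.F i * Kp p U.A U.L U.Linv i)
    ∧ cou (U.F i) = 0)

/-- The rational QUESA with its Hopf superalgebra structure (Theorem 4.2). -/
structure UqHopf extends UqAlg k n p where
  m2 : (A ⊗[Kq k] A) →ₗ[Kq k] (A ⊗[Kq k] A) →ₗ[Kq k] (A ⊗[Kq k] A)
  cop : A →ₗ[Kq k] A ⊗[Kq k] A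
  cou : A →ₗ[Kq k] Kq k
  ant : A →ₗ[Kq k] A
  bialg : IsSuperBialg (Kq k) A g m2 cop cou
  antipode : IsAntipode (Kq k) A cop cou ant
  formulas : UqHopfFormulas k n p toUqAlg cop cou ant

/-- The elements `Θ_i` of Definition 4.3. -/
def Theta (U : UqAlg k n p) (i : ℕ) : U.A :=
  ((qpol k p i - qpolInv k p i)⁻¹ : Kq k) •
    ((if p i = 0 then U.L i else U.Linv i)
        * (if p (i + 1) = 0 then U.Linv (i + 1) else U.L (i + 1))
      - (if p i = 0 then U.Linv i else U.L i)
        * (if p (i + 1) = 0 then U.L (i + 1) else U.Linv (i + 1)))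

/-- The set of generators of the integral form `U_q^int(gl_n^p)`. -/
def UqIntSet (U : UqAlg k n p) : Set U.A :=
  {a : U.A | ∃ i ∈ Finset.Icc 1 (n - 1), a = U.E i}
    ∪ {a : U.A | ∃ s ∈ Finset.Icc 1 n, a = U.L s}
    ∪ {a : U.A | ∃ s ∈ Finset.Icc 1 n, a = U.Linv s}
    ∪ {a : U.A | ∃ i ∈ Finset.Icc 1 (n - 1), a = Theta k n p U i}
    ∪ {a : U.A | ∃ i ∈ Finset.Icc 1 (n - 1), a = U.F i}

/-- The integral form `U_q^int(gl_n^p)`: the `k[q,q⁻¹]`-subsuperalgebra of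
`U_q(gl_n^p)` generated by the `E_i, L_k^{±1}, Θ_i, F_i` (realized as the
`k`-subalgebra generated by these elements together with `q^{±1}·1`). -/
def UqInt (U : UqAlg k n p) : Subalgebra k U.A :=
  Algebra.adjoin k (UqIntSet k n p U
    ∪ {algebraMap (Kq k) U.A RatFunc.X, algebraMap (Kq k) U.A (RatFunc.X)⁻¹})

end Poly

end QGLS

/-!
The generators of `U_q^int` are of three kinds: the grouplike units `L_k^{±1}`, the scalars
`q^{±1}`, and the skew-primitive elements `E_i`, `F_i`, `Θ_i`; for `Θ_i` this is the identity
`Δ(Θ_i) = Θ_i ⊗ L_i^{+(−1)^{p(i)}} L_{i+1}^{−(−1)^{p(i+1)}}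
  + L_i^{−(−1)^{p(i)}} L_{i+1}^{+(−1)^{p(i+1)}} ⊗ Θ_i`.
Hence `U_q^int` is spanned by monomials in these letters, and a monomial `w` with `m`
skew-primitive letters satisfies `Δ(w) = w ⊗ γ + ∑ w' ⊗ w''` with `γ` an invertible grouplike
element of `U_q^int`, each `w'` a monomial with fewer than `m` skew-primitive letters and each
`w''` in `U_q^int`. This gives `Δ(U_q^int) ⊆ U_q^int ⊗ U_q^int` at once; and the antipode
axiom `S(w) γ + ∑ S(w') w'' = ε(w)` yields `S(w) ∈ U_q^int` by induction on `m`, since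
`ε(U_q^int) ⊆ k[q, q⁻¹]` (the counit is multiplicative and takes the values `0`, `1`, `q^{±1}`
on the generators).
-/

namespace QGLS

section SuperBialgebra

variable {R K A : Type} [CommRing R] [CommRing K] [Ring A] [Algebra K A] [Algebra R A]
  {g : ZMod 2 → Submodule K A} {m2 : (A ⊗[K] A) →ₗ[K] (A ⊗[K] A) →ₗ[K] (A ⊗[K] A)}
  {cop : A →ₗ[K] A ⊗[K] A} {cou : A →ₗ[K] K}

lemma IsSuperMul.apply_tmul_tmul_of_mem_zero (h : IsSuperMul K A g m2) {e : ZMod 2}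
    (a : A) {b c : A} (d : A) (hb : b ∈ g 0) (hc : c ∈ g e) :
    m2 (a ⊗ₜ b) (c ⊗ₜ d) = (a * c) ⊗ₜ (b * d) := by
  rw [h 0 e a b c d hb hc, zero_mul, sg, if_pos rfl, one_smul]

lemma IsSuperBialg.counit_algebraMap (hA : IsSuperBialg K A g m2 cop cou) (c : K) :
    cou (algebraMap K A c) = c := by
  rw [Algebra.algebraMap_eq_smul_one, map_smul, hA.counit_one, smul_eq_mul, mul_one]

lemma sg_smul_mem {M : Type} [AddCommGroup M] [Module K M] {H : AddSubgroup M} (e : ZMod 2)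
    {t : M} (ht : t ∈ H) : sg K e • t ∈ H := by
  unfold sg
  split_ifs
  · rwa [one_smul]
  · rw [neg_one_smul]; exact neg_mem ht

structure IsGrouplikeUnit (g : ZMod 2 → Submodule K A) (cop : A →ₗ[K] A ⊗[K] A)
    (B : Subalgebra R A) (G : A) : Prop where
  mem : G ∈ B
  even : G ∈ g 0
  comul : cop G = G ⊗ₜ G
  exists_inv : ∃ G' ∈ B, G * G' = 1 ∧ G' * G = 1

namespace IsGrouplikeUnit

variable {B : Subalgebra R A}

lemma one (hA : IsSuperBialg K A g m2 cop cou) : IsGrouplikeUnit g cop B 1 :=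
  ⟨one_mem B, hA.grading.one_mem, hA.comul_one, 1, one_mem B, one_mul 1, one_mul 1⟩

lemma mul (hA : IsSuperBialg K A g m2 cop cou) {G H : A} (hG : IsGrouplikeUnit g cop B G)
    (hH : IsGrouplikeUnit g cop B H) : IsGrouplikeUnit g cop B (G * H) := by
  obtain ⟨G', hG'B, hGG', hG'G⟩ := hG.exists_inv
  obtain ⟨H', hH'B, hHH', hH'H⟩ := hH.exists_inv
  refine ⟨mul_mem hG.mem hH.mem, by simpa using hA.grading.mul_mem hG.even hH.even, ?_,
    H' * G', mul_mem hH'B hG'B, ?_, ?_⟩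
  · rw [hA.comul_mul, hG.comul, hH.comul,
      hA.superMul.apply_tmul_tmul_of_mem_zero _ _ hG.even hH.even]
  · rw [mul_assoc, ← mul_assoc H, hHH', one_mul, hGG']
  · rw [mul_assoc, ← mul_assoc G', hG'G, one_mul, hH'H]

end IsGrouplikeUnit

structure IsSkewPrimitive (g : ZMod 2 → Submodule K A) (cop : A →ₗ[K] A ⊗[K] A)
    (B : Subalgebra R A) (x : A) : Prop where
  mem : x ∈ B
  homogeneous : ∃ e, x ∈ g e
  comul : ∃ b c, IsGrouplikeUnit g cop B b ∧ IsGrouplikeUnit g cop B c ∧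
    cop x = x ⊗ₜ c + b ⊗ₜ x

def IsLetter (g : ZMod 2 → Submodule K A) (cop : A →ₗ[K] A ⊗[K] A) (B : Subalgebra R A)
    (t : A) : Prop :=
  IsGrouplikeUnit g cop B t ∨ IsSkewPrimitive g cop B t ∨
    (t ∈ B ∧ t ∈ Set.range (algebraMap K A))

inductive IsMonomial (g : ZMod 2 → Submodule K A) (cop : A →ₗ[K] A ⊗[K] A)
    (B : Subalgebra R A) : ℕ → A → Prop
  | one : IsMonomial g cop B 0 1
  | mul_grouplike {m : ℕ} {u G : A} : IsMonomial g cop B m u → IsGrouplikeUnit g cop B G →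
      IsMonomial g cop B m (u * G)
  | mul_scalar {m : ℕ} {u : A} {c : K} : IsMonomial g cop B m u → algebraMap K A c ∈ B →
      IsMonomial g cop B m (u * algebraMap K A c)
  | mul_skewPrimitive {m : ℕ} {u x : A} : IsMonomial g cop B m u → IsSkewPrimitive g cop B x →
      IsMonomial g cop B (m + 1) (u * x)

variable {B : Subalgebra R A}

lemma IsMonomial.mem {m : ℕ} {w : A} (hw : IsMonomial g cop B m w) : w ∈ B := by
  induction hw with
  | one => exact one_mem B
  | @mul_grouplike _ _ G _ hG ih => exact mul_mem ih hG.mem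
  | mul_scalar _ hc ih => exact mul_mem ih hc
  | mul_skewPrimitive _ hx ih => exact mul_mem ih hx.mem

lemma IsMonomial.exists_mul_letter {m : ℕ} {w t : A} (hw : IsMonomial g cop B m w)
    (ht : IsLetter g cop B t) : ∃ m', IsMonomial g cop B m' (w * t) := by
  rcases ht with hG | hx | ⟨hc, c, rfl⟩
  · exact ⟨m, hw.mul_grouplike hG⟩
  · exact ⟨m + 1, hw.mul_skewPrimitive hx⟩
  · exact ⟨m, hw.mul_scalar hc⟩

lemma mem_span_monomials_of_mem_adjoin {T : Set A}
    (hT : ∀ t ∈ T, IsLetter g cop (Algebra.adjoin R T) t) {a : A}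
    (ha : a ∈ Algebra.adjoin R T) :
    a ∈ Submodule.span R {w | ∃ m, IsMonomial g cop (Algebra.adjoin R T) m w} := by
  rw [← Subalgebra.mem_toSubmodule, Algebra.adjoin_eq_span] at ha
  refine Submodule.span_mono ?_ ha
  intro w hw
  induction hw using Submonoid.closure_induction_right with
  | one => exact ⟨0, .one⟩
  | mul_right w _ t ht ih =>
    obtain ⟨m, hm⟩ := ih
    exact hm.exists_mul_letter (hT t ht)

variable (g cop B) in
def lowerTerms (m : ℕ) : AddSubgroup (A ⊗[K] A) :=
  AddSubgroup.closure
    {t | ∃ r < m, ∃ b c e, IsMonomial g cop B r b ∧ c ∈ B ∧ c ∈ g e ∧ t = b ⊗ₜ c}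

lemma tmul_mem_lowerTerms {m r : ℕ} {b c : A} {e : ZMod 2} (hr : r < m)
    (hb : IsMonomial g cop B r b) (hcB : c ∈ B) (hc : c ∈ g e) :
    b ⊗ₜ c ∈ lowerTerms g cop B m :=
  AddSubgroup.subset_closure ⟨r, hr, b, c, e, hb, hcB, hc, rfl⟩

lemma lowerTerms_mono {m m' : ℕ} (h : m ≤ m') :
    lowerTerms g cop B m ≤ lowerTerms g cop B m' :=
  AddSubgroup.closure_mono fun _ ⟨r, hr, b, c, e, hb, hcB, hc, ht⟩ =>
    ⟨r, by omega, b, c, e, hb, hcB, hc, ht⟩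

lemma superMul_mem_lowerTerms (hA : IsSuperBialg K A g m2 cop cou) {m d : ℕ} {y z : A}
    {e e' : ZMod 2} (hy : y ∈ g e) (hzB : z ∈ B) (hz : z ∈ g e')
    (hmul : ∀ r b, IsMonomial g cop B r b → IsMonomial g cop B (r + d) (b * y))
    {t : A ⊗[K] A} (ht : t ∈ lowerTerms g cop B m) :
    m2 t (y ⊗ₜ z) ∈ lowerTerms g cop B (m + d) := by
  induction ht using AddSubgroup.closure_induction with
  | mem t ht =>
    obtain ⟨r, hr, b, c, e'', hb, hcB, hc, rfl⟩ := ht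
    rw [hA.superMul e'' e b c y z hc hy]
    exact sg_smul_mem _ (tmul_mem_lowerTerms (by omega) (hmul r b hb) (mul_mem hcB hzB)
      (hA.grading.mul_mem hc hz))
  | zero => rw [map_zero, LinearMap.zero_apply]; exact zero_mem _
  | add _ _ _ _ h₁ h₂ => rw [map_add, LinearMap.add_apply]; exact add_mem h₁ h₂
  | neg _ _ h => rw [map_neg, LinearMap.neg_apply]; exact neg_mem h

lemma superMul_comul_sub_mem_lowerTerms (hA : IsSuperBialg K A g m2 cop cou) {m d : ℕ}
    {u γ y z : A} {e e' : ZMod 2} (hγ : γ ∈ g 0) (hu : cop u - u ⊗ₜ γ ∈ lowerTerms g cop B m)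
    (hy : y ∈ g e) (hzB : z ∈ B) (hz : z ∈ g e')
    (hmul : ∀ r b, IsMonomial g cop B r b → IsMonomial g cop B (r + d) (b * y)) :
    m2 (cop u) (y ⊗ₜ z) - (u * y) ⊗ₜ (γ * z) ∈ lowerTerms g cop B (m + d) := by
  have hsplit : m2 (cop u) (y ⊗ₜ z)
      = m2 (u ⊗ₜ γ) (y ⊗ₜ z) + m2 (cop u - u ⊗ₜ γ) (y ⊗ₜ z) := by
    rw [← LinearMap.add_apply, ← map_add, add_sub_cancel]
  rw [hsplit, hA.superMul.apply_tmul_tmul_of_mem_zero _ _ hγ hy, add_sub_cancel_left]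
  exact superMul_mem_lowerTerms hA hy hzB hz hmul hu

theorem IsMonomial.exists_comul_sub_mem_lowerTerms (hA : IsSuperBialg K A g m2 cop cou)
    {m : ℕ} {w : A} (hw : IsMonomial g cop B m w) :
    ∃ γ, IsGrouplikeUnit g cop B γ ∧ cop w - w ⊗ₜ γ ∈ lowerTerms g cop B m := by
  induction hw with
  | one => exact ⟨1, .one hA, by rw [hA.comul_one, sub_self]; exact zero_mem _⟩
  | @mul_grouplike _ _ G _ hG ih =>
    obtain ⟨γ, hγ, hR⟩ := ih
    refine ⟨γ * G, hγ.mul hA hG, ?_⟩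
    rw [hA.comul_mul, hG.comul]
    exact superMul_comul_sub_mem_lowerTerms (d := 0) hA hγ.even hR hG.even hG.mem hG.even
      fun _ _ hb => hb.mul_grouplike hG
  | @mul_scalar _ _ c _ hc ih =>
    obtain ⟨γ, hγ, hR⟩ := ih
    have hc0 : algebraMap K A c ∈ g 0 := by
      rw [Algebra.algebraMap_eq_smul_one]; exact (g 0).smul_mem c hA.grading.one_mem
    have hcop : cop (algebraMap K A c) = algebraMap K A c ⊗ₜ 1 := by
      rw [Algebra.algebraMap_eq_smul_one, map_smul, hA.comul_one, TensorProduct.smul_tmul']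
    refine ⟨γ, hγ, ?_⟩
    rw [hA.comul_mul, hcop]
    simpa using superMul_comul_sub_mem_lowerTerms (d := 0) hA hγ.even hR hc0 (one_mem B)
      hA.grading.one_mem fun _ _ hb => hb.mul_scalar hc
  | @mul_skewPrimitive m u x hu hx ih =>
    obtain ⟨γ, hγ, hR⟩ := ih
    obtain ⟨e, hxe⟩ := hx.homogeneous
    obtain ⟨b, c, hb, hc, hcop⟩ := hx.comul
    refine ⟨γ * c, hγ.mul hA hc, ?_⟩
    have hlead := superMul_comul_sub_mem_lowerTerms (d := 1) hA hγ.even hR hxe hc.mem hc.even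
      fun _ _ hw => hw.mul_skewPrimitive hx
    have hrest := superMul_comul_sub_mem_lowerTerms (d := 0) hA hγ.even hR hb.even hx.mem hxe
      fun _ _ hw => hw.mul_grouplike hb
    have hnext : (u * b) ⊗ₜ (γ * x) ∈ lowerTerms g cop B (m + 1) :=
      tmul_mem_lowerTerms (Nat.lt_succ_self m) (hu.mul_grouplike hb) (mul_mem hγ.mem hx.mem)
        (by simpa using hA.grading.mul_mem hγ.even hxe)
    rw [hA.comul_mul, hcop, map_add]
    convert add_mem hlead (add_mem hnext (lowerTerms_mono (Nat.le_succ m) hrest)) using 1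
    abel

lemma mul_map_antipode_mem {ant : A →ₗ[K] A} {m : ℕ}
    (ih : ∀ r < m, ∀ b, IsMonomial g cop B r b → ant b ∈ B) {t : A ⊗[K] A}
    (ht : t ∈ lowerTerms g cop B m) :
    LinearMap.mul' K A (TensorProduct.map ant LinearMap.id t) ∈ B := by
  induction ht using AddSubgroup.closure_induction with
  | mem t ht =>
    obtain ⟨r, hr, b, c, e, hb, hcB, -, rfl⟩ := ht
    rw [TensorProduct.map_tmul, LinearMap.mul'_apply, LinearMap.id_apply]
    exact mul_mem (ih r hr b hb) hcB
  | zero => rw [map_zero, map_zero]; exact zero_mem B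
  | add _ _ _ _ h₁ h₂ => rw [map_add, map_add]; exact add_mem h₁ h₂
  | neg _ _ h => rw [map_neg, map_neg]; exact neg_mem h

theorem IsMonomial.antipode_mem (hA : IsSuperBialg K A g m2 cop cou) {ant : A →ₗ[K] A}
    (hS : IsAntipode K A cop cou ant) (hcou : ∀ a ∈ B, algebraMap K A (cou a) ∈ B) {m : ℕ}
    {w : A} (hw : IsMonomial g cop B m w) : ant w ∈ B := by
  induction m using Nat.strong_induction_on generalizing w with
  | _ m ih =>
    obtain ⟨γ, hγ, hR⟩ := hw.exists_comul_sub_mem_lowerTerms hA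
    obtain ⟨γ', hγ'B, hγγ', -⟩ := hγ.exists_inv
    obtain ⟨J, hJ, hSw⟩ : ∃ J ∈ B, ant w * γ + J = algebraMap K A (cou w) := by
      refine ⟨_, mul_map_antipode_mem (fun r hr b hb => ih r hr hb) hR, ?_⟩
      rw [← hS.1 w]
      conv_rhs => rw [← add_sub_cancel (w ⊗ₜ[K] γ) (cop w)]
      rw [map_add, map_add, TensorProduct.map_tmul, LinearMap.mul'_apply, LinearMap.id_apply]
    have : ant w = (algebraMap K A (cou w) - J) * γ' := by
      rw [← hSw, add_sub_cancel_right, mul_assoc, hγγ', mul_one]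
    rw [this]
    exact mul_mem (sub_mem (hcou w hw.mem) hJ) hγ'B

variable (B) in
def tensorSquare : AddSubgroup (A ⊗[K] A) :=
  AddSubgroup.closure {t | ∃ b ∈ B, ∃ c ∈ B, t = b ⊗ₜ c}

lemma lowerTerms_le_tensorSquare (m : ℕ) : lowerTerms g cop B m ≤ tensorSquare B :=
  AddSubgroup.closure_mono fun _ ⟨_, _, b, c, _, hb, hcB, _, ht⟩ => ⟨b, hb.mem, c, hcB, ht⟩

lemma IsMonomial.comul_mem_tensorSquare (hA : IsSuperBialg K A g m2 cop cou) {m : ℕ} {w : A}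
    (hw : IsMonomial g cop B m w) : cop w ∈ tensorSquare B := by
  obtain ⟨γ, hγ, hR⟩ := hw.exists_comul_sub_mem_lowerTerms hA
  rw [← add_sub_cancel (w ⊗ₜ[K] γ) (cop w)]
  exact add_mem (AddSubgroup.subset_closure ⟨w, hw.mem, γ, hγ.mem, rfl⟩)
    (lowerTerms_le_tensorSquare m hR)

lemma exists_sum_tmul_of_mem_tensorSquare {t : A ⊗[K] A} (ht : t ∈ tensorSquare B) :
    ∃ (ι : Type) (s : Finset ι) (b c : ι → A),
      (∀ i ∈ s, b i ∈ B ∧ c i ∈ B) ∧ t = ∑ i ∈ s, b i ⊗ₜ c i := by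
  induction ht using AddSubgroup.closure_induction with
  | mem t ht =>
    obtain ⟨b, hb, c, hc, rfl⟩ := ht
    exact ⟨Unit, {()}, fun _ => b, fun _ => c, fun _ _ => ⟨hb, hc⟩, by simp⟩
  | zero => exact ⟨Empty, ∅, Empty.elim, Empty.elim, by simp, by simp⟩
  | add _ _ _ _ h₁ h₂ =>
    obtain ⟨ι₁, s₁, b₁, c₁, hs₁, rfl⟩ := h₁
    obtain ⟨ι₂, s₂, b₂, c₂, hs₂, rfl⟩ := h₂
    refine ⟨ι₁ ⊕ ι₂, s₁.disjSum s₂, Sum.elim b₁ b₂, Sum.elim c₁ c₂, ?_, by simp⟩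
    rintro (i | i) hi
    · exact hs₁ i (Finset.inl_mem_disjSum.mp hi)
    · exact hs₂ i (Finset.inr_mem_disjSum.mp hi)
  | neg _ _ h =>
    obtain ⟨ι, s, b, c, hs, rfl⟩ := h
    refine ⟨ι, s, b, fun i => -c i, fun i hi => ⟨(hs i hi).1, neg_mem (hs i hi).2⟩, ?_⟩
    simp only [TensorProduct.tmul_neg, Finset.sum_neg_distrib]

variable [Algebra R K] [IsScalarTower R K A]

lemma algebraMap_smul_mem_tensorSquare (r : R) {t : A ⊗[K] A} (ht : t ∈ tensorSquare B) :
    algebraMap R K r • t ∈ tensorSquare B := by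
  induction ht using AddSubgroup.closure_induction with
  | mem t ht =>
    obtain ⟨b, hb, c, hc, rfl⟩ := ht
    rw [← TensorProduct.tmul_smul, algebraMap_smul]
    exact AddSubgroup.subset_closure ⟨b, hb, r • c, B.smul_mem hc r, rfl⟩
  | zero => rw [smul_zero]; exact zero_mem _
  | add _ _ _ _ h₁ h₂ => rw [smul_add]; exact add_mem h₁ h₂
  | neg _ _ h => rw [smul_neg]; exact neg_mem h

variable {T : Set A}

theorem counit_mem_of_mem_adjoin (hA : IsSuperBialg K A g m2 cop cou) {C : Subalgebra R K}
    (hT : ∀ t ∈ T, cou t ∈ C) {a : A} (ha : a ∈ Algebra.adjoin R T) : cou a ∈ C := by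
  induction ha using Algebra.adjoin_induction with
  | mem t ht => exact hT t ht
  | algebraMap r =>
    rw [IsScalarTower.algebraMap_apply R K A, hA.counit_algebraMap]
    exact C.algebraMap_mem r
  | add _ _ _ _ h₁ h₂ => rw [map_add]; exact add_mem h₁ h₂
  | mul _ _ _ _ h₁ h₂ => rw [hA.counit_mul]; exact mul_mem h₁ h₂

theorem comul_mem_tensorSquare_of_mem_adjoin (hA : IsSuperBialg K A g m2 cop cou)
    (hT : ∀ t ∈ T, IsLetter g cop (Algebra.adjoin R T) t) {a : A}
    (ha : a ∈ Algebra.adjoin R T) : cop a ∈ tensorSquare (Algebra.adjoin R T) := by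
  have hspan := mem_span_monomials_of_mem_adjoin hT ha
  clear ha
  induction hspan using Submodule.span_induction with
  | mem w hw =>
    obtain ⟨_, hw⟩ := hw
    exact hw.comul_mem_tensorSquare hA
  | zero => rw [map_zero]; exact zero_mem _
  | add _ _ _ _ h₁ h₂ => rw [map_add]; exact add_mem h₁ h₂
  | smul r x _ h =>
    rw [← algebraMap_smul K r x, map_smul]
    exact algebraMap_smul_mem_tensorSquare r h

theorem antipode_mem_of_mem_adjoin (hA : IsSuperBialg K A g m2 cop cou) {ant : A →ₗ[K] A}
    (hS : IsAntipode K A cop cou ant) (hT : ∀ t ∈ T, IsLetter g cop (Algebra.adjoin R T) t)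
    (hcou : ∀ a ∈ Algebra.adjoin R T, algebraMap K A (cou a) ∈ Algebra.adjoin R T) {a : A}
    (ha : a ∈ Algebra.adjoin R T) : ant a ∈ Algebra.adjoin R T := by
  have hspan := mem_span_monomials_of_mem_adjoin hT ha
  clear ha
  induction hspan using Submodule.span_induction with
  | mem w hw =>
    obtain ⟨_, hw⟩ := hw
    exact hw.antipode_mem hA hS hcou
  | zero => rw [map_zero]; exact zero_mem _
  | add _ _ _ _ h₁ h₂ => rw [map_add]; exact add_mem h₁ h₂
  | smul r x _ h =>
    rw [← algebraMap_smul K r x, map_smul, algebraMap_smul]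
    exact Subalgebra.smul_mem _ h r

end SuperBialgebra

section IntegralForm

variable {k : Type} [Field k] {n : ℕ} {p : ℕ → ZMod 2} (U : UqHopf k n p)

local notation "Uint" => UqInt k n p U.toUqAlg

lemma isGrouplikeUnit_L {s : ℕ} (hs : s ∈ Icc 1 n) : IsGrouplikeUnit U.g U.cop Uint (U.L s) :=
  ⟨Algebra.subset_adjoin (Or.inl (Or.inl (Or.inl (Or.inl (Or.inr ⟨s, hs, rfl⟩))))),
    (U.parL s hs).1, (U.formulas.2.1 s hs).1, U.Linv s,
    Algebra.subset_adjoin (Or.inl (Or.inl (Or.inl (Or.inr ⟨s, hs, rfl⟩)))),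
    U.rels.relLinv s hs⟩

lemma isGrouplikeUnit_Linv {s : ℕ} (hs : s ∈ Icc 1 n) :
    IsGrouplikeUnit U.g U.cop Uint (U.Linv s) :=
  ⟨Algebra.subset_adjoin (Or.inl (Or.inl (Or.inl (Or.inr ⟨s, hs, rfl⟩)))),
    (U.parL s hs).2, (U.formulas.2.1 s hs).2.1, U.L s, (isGrouplikeUnit_L U hs).mem,
    (U.rels.relLinv s hs).symm⟩

lemma isGrouplikeUnit_ite_L_Linv {s : ℕ} (hs : s ∈ Icc 1 n) (c : Prop) [Decidable c] :
    IsGrouplikeUnit U.g U.cop Uint (if c then U.L s else U.Linv s) ∧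
      IsGrouplikeUnit U.g U.cop Uint (if c then U.Linv s else U.L s) := by
  have := isGrouplikeUnit_L U hs
  have := isGrouplikeUnit_Linv U hs
  constructor <;> split_ifs <;> assumption

lemma counit_ite_L_Linv {s : ℕ} (hs : s ∈ Icc 1 n) (c : Prop) [Decidable c] :
    U.cou (if c then U.L s else U.Linv s) = 1 ∧ U.cou (if c then U.Linv s else U.L s) = 1 := by
  obtain ⟨-, -, -, -, hL, hLinv⟩ := U.formulas.2.1 s hs
  constructor <;> split_ifs <;> assumption

lemma mem_Icc_and_succ_mem_Icc {i : ℕ} (hi : i ∈ Icc 1 (n - 1)) :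
    i ∈ Icc 1 n ∧ i + 1 ∈ Icc 1 n := by
  simp only [Finset.mem_Icc] at hi ⊢
  omega

lemma isSkewPrimitive_E {i : ℕ} (hi : i ∈ Icc 1 (n - 1)) :
    IsSkewPrimitive U.g U.cop Uint (U.E i) := by
  obtain ⟨hi₁, hi₂⟩ := mem_Icc_and_succ_mem_Icc hi
  refine ⟨Algebra.subset_adjoin (Or.inl (Or.inl (Or.inl (Or.inl (Or.inl ⟨i, hi, rfl⟩))))),
    ⟨_, U.parE i hi⟩, Kp p U.A U.L U.Linv i, 1, ?_, .one U.bialg, (U.formulas.1 i hi).1⟩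
  exact (isGrouplikeUnit_ite_L_Linv U hi₁ _).1.mul U.bialg
    (isGrouplikeUnit_ite_L_Linv U hi₂ _).1

lemma isSkewPrimitive_F {i : ℕ} (hi : i ∈ Icc 1 (n - 1)) :
    IsSkewPrimitive U.g U.cop Uint (U.F i) := by
  obtain ⟨hi₁, hi₂⟩ := mem_Icc_and_succ_mem_Icc hi
  refine ⟨Algebra.subset_adjoin (Or.inl (Or.inr ⟨i, hi, rfl⟩)), ⟨_, U.parF i hi⟩,
    1, Km p U.A U.L U.Linv i, .one U.bialg, ?_, (U.formulas.2.2 i hi).1⟩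
  exact (isGrouplikeUnit_ite_L_Linv U hi₁ _).2.mul U.bialg
    (isGrouplikeUnit_ite_L_Linv U hi₂ _).2

lemma isSkewPrimitive_Theta {i : ℕ} (hi : i ∈ Icc 1 (n - 1)) :
    IsSkewPrimitive U.g U.cop Uint (Theta k n p U.toUqAlg i) := by
  obtain ⟨hi₁, hi₂⟩ := mem_Icc_and_succ_mem_Icc hi
  have hL₁ := isGrouplikeUnit_ite_L_Linv U hi₁ (p i = 0)
  have hL₂ := isGrouplikeUnit_ite_L_Linv U hi₂ (p (i + 1) = 0)
  have hP := hL₁.1.mul U.bialg hL₂.2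
  have hP' := hL₁.2.mul U.bialg hL₂.1
  refine ⟨Algebra.subset_adjoin (Or.inl (Or.inl (Or.inr ⟨i, hi, rfl⟩))),
    ⟨0, Submodule.smul_mem _ _ (sub_mem hP.even hP'.even)⟩, _, _, hP', hP, ?_⟩
  rw [Theta, map_smul, map_sub, hP.comul, hP'.comul]
  simp only [smul_sub, TensorProduct.smul_tmul', TensorProduct.sub_tmul, TensorProduct.tmul_sub,
    TensorProduct.tmul_smul]
  abel

lemma isLetter_of_mem_generators : ∀ t ∈ UqIntSet k n p U.toUqAlg ∪
      {algebraMap (Kq k) U.A RatFunc.X, algebraMap (Kq k) U.A (RatFunc.X)⁻¹},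
    IsLetter U.g U.cop Uint t := by
  rintro t (((((⟨i, hi, rfl⟩ | ⟨s, hs, rfl⟩) | ⟨s, hs, rfl⟩) | ⟨i, hi, rfl⟩) | ⟨i, hi, rfl⟩) |
    hX)
  · exact .inr (.inl (isSkewPrimitive_E U hi))
  · exact .inl (isGrouplikeUnit_L U hs)
  · exact .inl (isGrouplikeUnit_Linv U hs)
  · exact .inr (.inl (isSkewPrimitive_Theta U hi))
  · exact .inr (.inl (isSkewPrimitive_F U hi))
  · refine .inr (.inr ⟨Algebra.subset_adjoin (Or.inr hX), ?_⟩)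
    rcases hX with rfl | rfl <;> exact ⟨_, rfl⟩

lemma counit_mem_laurent_of_mem_generators : ∀ t ∈ UqIntSet k n p U.toUqAlg ∪
      {algebraMap (Kq k) U.A RatFunc.X, algebraMap (Kq k) U.A (RatFunc.X)⁻¹},
    U.cou t ∈ Algebra.adjoin k ({RatFunc.X, (RatFunc.X)⁻¹} : Set (Kq k)) := by
  rintro t (((((⟨i, hi, rfl⟩ | ⟨s, hs, rfl⟩) | ⟨s, hs, rfl⟩) | ⟨i, hi, rfl⟩) | ⟨i, hi, rfl⟩) |
    hX)
  · rw [(U.formulas.1 i hi).2.2]; exact zero_mem _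
  · rw [(U.formulas.2.1 s hs).2.2.2.2.1]; exact one_mem _
  · rw [(U.formulas.2.1 s hs).2.2.2.2.2]; exact one_mem _
  · obtain ⟨hi₁, hi₂⟩ := mem_Icc_and_succ_mem_Icc hi
    rw [Theta, map_smul, map_sub, U.bialg.counit_mul, U.bialg.counit_mul,
      (counit_ite_L_Linv U hi₁ _).1, (counit_ite_L_Linv U hi₁ _).2,
      (counit_ite_L_Linv U hi₂ _).1, (counit_ite_L_Linv U hi₂ _).2, sub_self, smul_zero]
    exact zero_mem _
  · rw [(U.formulas.2.2 i hi).2.2]; exact zero_mem _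
  · rcases hX with rfl | rfl <;> rw [U.bialg.counit_algebraMap] <;>
      exact Algebra.subset_adjoin (by simp)

lemma algebraMap_mem_UqInt {c : Kq k}
    (hc : c ∈ Algebra.adjoin k ({RatFunc.X, (RatFunc.X)⁻¹} : Set (Kq k))) :
    algebraMap (Kq k) U.A c ∈ Uint := by
  refine Algebra.adjoin_le
    (S := (UqInt k n p U.toUqAlg).comap (IsScalarTower.toAlgHom k (Kq k) U.A)) ?_ hc
  rintro _ (rfl | rfl) <;> exact Algebra.subset_adjoin (Or.inr (by simp))

end IntegralForm

theorem statement14_general (k : Type) [Field k] (n : ℕ)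
    (p : ℕ → ZMod 2) (U : UqHopf k n p) :
    -- closed under the antipode:
    (∀ a ∈ UqInt k n p U.toUqAlg, U.ant a ∈ UqInt k n p U.toUqAlg) ∧
    -- the counit takes values in `k[q,q⁻¹] ⊆ k(q)`:
    (∀ a ∈ UqInt k n p U.toUqAlg,
      U.cou a ∈ Algebra.adjoin k ({RatFunc.X, (RatFunc.X)⁻¹} : Set (Kq k))) ∧
    -- the coproduct takes values in `U_q^int ⊗ U_q^int`:
    (∀ a ∈ UqInt k n p U.toUqAlg,
      ∃ (ι : Type) (s : Finset ι) (b c : ι → U.A),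
        (∀ i ∈ s, b i ∈ UqInt k n p U.toUqAlg ∧ c i ∈ UqInt k n p U.toUqAlg) ∧
        U.cop a = ∑ i ∈ s, b i ⊗ₜ[Kq k] c i) := by
  have hcou : ∀ a ∈ UqInt k n p U.toUqAlg,
      U.cou a ∈ Algebra.adjoin k ({RatFunc.X, (RatFunc.X)⁻¹} : Set (Kq k)) :=
    fun _ => counit_mem_of_mem_adjoin U.bialg (counit_mem_laurent_of_mem_generators U)
  refine ⟨fun _ => antipode_mem_of_mem_adjoin U.bialg U.antipode (isLetter_of_mem_generators U)
      fun a ha => algebraMap_mem_UqInt U (hcou a ha), hcou, fun _ ha => ?_⟩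
  exact exists_sum_tmul_of_mem_tensorSquare
    (comul_mem_tensorSquare_of_mem_adjoin U.bialg (isLetter_of_mem_generators U) ha)

/-- Proposition 4.4.  The integral form `U_q^int(gl_n^p)`
— the `k[q,q⁻¹]`-subsuperalgebra of `U_q(gl_n^p)` generated by the
`E_i, L_k^{±1}, Θ_i, F_i` — is a Hopf subsuperalgebra over `k[q,q⁻¹]` of the
Hopf `k(q)`-superalgebra `U_q(gl_n^p)`:  it is closed under the antipode, its
counit takes values in `k[q,q⁻¹]`, and its coproduct takes values in
`U_q^int ⊗ U_q^int`. -/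
theorem statement14 (k : Type) [Field k] [CharZero k] (n : ℕ) (hn : 2 ≤ n)
    (p : ℕ → ZMod 2) (U : UqHopf k n p) :
    -- closed under the antipode:
    (∀ a ∈ UqInt k n p U.toUqAlg, U.ant a ∈ UqInt k n p U.toUqAlg) ∧
    -- the counit takes values in `k[q,q⁻¹] ⊆ k(q)`:
    (∀ a ∈ UqInt k n p U.toUqAlg,
      U.cou a ∈ Algebra.adjoin k ({RatFunc.X, (RatFunc.X)⁻¹} : Set (Kq k))) ∧
    -- the coproduct takes values in `U_q^int ⊗ U_q^int`:
    (∀ a ∈ UqInt k n p U.toUqAlg,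
      ∃ (ι : Type) (s : Finset ι) (b c : ι → U.A),
        (∀ i ∈ s, b i ∈ UqInt k n p U.toUqAlg ∧ c i ∈ UqInt k n p U.toUqAlg) ∧
        U.cop a = ∑ i ∈ s, b i ⊗ₜ[Kq k] c i) :=
  statement14_general k n p U

end QGLS
end
end
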